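/- arXiv:2504.06127 — 10 statements merged into one kernel-verified Lean document; each statement's English description precedes it below -/
import Mathlib

section
/- The function N(τ) = ∫_{−∞}^τ (f₁(x) − f₀(x)) dx is strictly quasiconvex with a minimum at τ_C, and N(τ) → 0 as τ → −∞ and as τ → +∞. -/
open MeasureTheory Set Filter

/-! Strict monotone likelihood ratio with `f₁(τ_C) = f₀(τ_C)` forces `f₁ - f₀` to be
negative left of `τ_C` and positive right of it, so `N` strictly decreases up to `τ_C` and
strictly increases after it. The limit at `-∞` is zero for any integrand, and at `+∞` the
limit is `∫ f₁ - ∫ f₀ = 0`. -/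

section SignChange

variable {α : Type*} [Preorder α] {f₀ f₁ : α → ℝ} {c x : α}

theorem sub_neg_of_lt_of_strictMono_div (hf₀ : ∀ x, 0 < f₀ x)
    (hmono : StrictMono fun x => f₁ x / f₀ x) (hc : f₁ c = f₀ c) (hx : x < c) :
    f₁ x - f₀ x < 0 := by
  have hratio : f₁ x / f₀ x < 1 := by
    simpa [hc, (hf₀ c).ne'] using hmono hx
  linarith [(div_lt_one (hf₀ x)).mp hratio]

theorem sub_pos_of_lt_of_strictMono_div (hf₀ : ∀ x, 0 < f₀ x)
    (hmono : StrictMono fun x => f₁ x / f₀ x) (hc : f₁ c = f₀ c) (hx : c < x) :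
    0 < f₁ x - f₀ x := by
  have hratio : 1 < f₁ x / f₀ x := by
    simpa [hc, (hf₀ c).ne'] using hmono hx
  linarith [(one_lt_div (hf₀ x)).mp hratio]

end SignChange

section IntegralIic

variable {g : ℝ → ℝ} {a b c : ℝ}

theorem setIntegral_Iic_lt_of_pos_on_Ioo (hg : IntegrableOn g (Iic b)) (hab : a < b)
    (hpos : ∀ x ∈ Ioo a b, 0 < g x) :
    ∫ x in Iic a, g x < ∫ x in Iic b, g x := by
  have hgab : IntervalIntegrable g volume a b :=
    (hg.mono_set (uIcc_of_le hab.le ▸ Icc_subset_Iic_self)).intervalIntegrable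
  have hdiff := intervalIntegral.integral_Iic_sub_Iic (hg.mono_set (Iic_subset_Iic.2 hab.le)) hg
  linarith [intervalIntegral.intervalIntegral_pos_of_pos_on hgab hpos hab]

theorem strictMonoOn_setIntegral_Iic (hg : Integrable g) (hpos : ∀ x, c < x → 0 < g x) :
    StrictMonoOn (fun τ => ∫ x in Iic τ, g x) (Ici c) :=
  fun _ ha _ _ hab =>
    setIntegral_Iic_lt_of_pos_on_Ioo hg.integrableOn hab fun x hx =>
      hpos x (lt_of_le_of_lt ha hx.1)

theorem strictAntiOn_setIntegral_Iic (hg : IntegrableOn g (Iic c))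
    (hneg : ∀ x, x < c → g x < 0) :
    StrictAntiOn (fun τ => ∫ x in Iic τ, g x) (Iic c) := by
  intro a _ b hb hab
  have hlt := setIntegral_Iic_lt_of_pos_on_Ioo (hg.mono_set (Iic_subset_Iic.2 hb)).neg hab
    fun x hx => neg_pos.2 (hneg x (lt_of_lt_of_le hx.2 hb))
  simp only [integral_neg'] at hlt
  exact neg_lt_neg_iff.1 hlt

theorem tendsto_setIntegral_Iic_atTop (hg : Integrable g) :
    Tendsto (fun τ => ∫ x in Iic τ, g x) atTop (nhds (∫ x, g x)) :=
  (aecover_Iic tendsto_id).integral_tendsto_of_countably_generated hg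

end IntegralIic

theorem stmt3_general (f0 f1 : ℝ → ℝ) (τC : ℝ)
    (hf0pos : ∀ x, 0 < f0 x)
    (hf0i : Integrable f0) (hf1i : Integrable f1)
    (hf0int : ∫ x, f0 x = 1) (hf1int : ∫ x, f1 x = 1)
    (hmlrp : StrictMono (fun x => f1 x / f0 x))
    (hτC : f1 τC = f0 τC) :
    StrictAntiOn (fun τ => ∫ x in Iic τ, (f1 x - f0 x)) (Iic τC) ∧
    StrictMonoOn (fun τ => ∫ x in Iic τ, (f1 x - f0 x)) (Ici τC) ∧
    Tendsto (fun τ => ∫ x in Iic τ, (f1 x - f0 x)) atBot (nhds 0) ∧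
    Tendsto (fun τ => ∫ x in Iic τ, (f1 x - f0 x)) atTop (nhds 0) := by
  have hg : Integrable fun x => f1 x - f0 x := hf1i.sub hf0i
  have htotal : ∫ x, (f1 x - f0 x) = 0 := by
    rw [integral_sub hf1i hf0i, hf1int, hf0int, sub_self]
  refine ⟨strictAntiOn_setIntegral_Iic hg.integrableOn
      (fun x hx => sub_neg_of_lt_of_strictMono_div hf0pos hmlrp hτC hx),
    strictMonoOn_setIntegral_Iic hg
      (fun x hx => sub_pos_of_lt_of_strictMono_div hf0pos hmlrp hτC hx),
    tendsto_integral_Iic_zero tendsto_id, ?_⟩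
  simpa only [htotal] using tendsto_setIntegral_Iic_atTop hg

theorem stmt3 (f0 f1 : ℝ → ℝ) (τC : ℝ)
    (hf0pos : ∀ x, 0 < f0 x) (hf1pos : ∀ x, 0 < f1 x)
    (hf0c : Continuous f0) (hf1c : Continuous f1)
    (hf0i : Integrable f0) (hf1i : Integrable f1)
    (hf0int : ∫ x, f0 x = 1) (hf1int : ∫ x, f1 x = 1)
    (hmlrp : StrictMono (fun x => f1 x / f0 x))
    (hτC : f1 τC = f0 τC) :
    StrictAntiOn (fun τ => ∫ x in Iic τ, (f1 x - f0 x)) (Iic τC) ∧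
    StrictMonoOn (fun τ => ∫ x in Iic τ, (f1 x - f0 x)) (Ici τC) ∧
    Tendsto (fun τ => ∫ x in Iic τ, (f1 x - f0 x)) atBot (nhds 0) ∧
    Tendsto (fun τ => ∫ x in Iic τ, (f1 x - f0 x)) atTop (nhds 0) :=
  stmt3_general f0 f1 τC hf0pos hf0i hf1i hf0int hf1int hmlrp hτC
end

section
/- If Δ_δ > 0 and τ_C does not solve ∫_τ^∞ (f₁ − f₀) dx = Δ_δ, then there exist exactly two thresholds τ_L < τ_C < τ_H with ∫_{τ_L}^∞ (f₁(x) − f₀(x)) dx = Δ_δ and ∫_{τ_H}^∞ (f₁(x) − f₀(x)) dx = Δ_δ. -/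
open MeasureTheory Set Filter Topology

lemma helper7 (g : ℝ → ℝ) (hgc : Continuous g) (hgi : Integrable g)
    (hgint : ∫ x, g x = 0) (τC : ℝ)
    (hneg : ∀ x, x < τC → g x < 0) (hpos : ∀ x, τC < x → 0 < g x)
    (Δ : ℝ) (hΔpos : 0 < Δ) (hΔle : Δ ≤ ∫ x in Ioi τC, g x)
    (hne : (∫ x in Ioi τC, g x) ≠ Δ) :
    ∃ τL τH : ℝ, τL < τC ∧ τC < τH ∧
      (∫ x in Ioi τL, g x) = Δ ∧ (∫ x in Ioi τH, g x) = Δ ∧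
      ∀ τ : ℝ, (∫ x in Ioi τ, g x) = Δ → τ = τL ∨ τ = τH := by
  set F : ℝ → ℝ := fun τ => ∫ x in Ioi τ, g x with hFdef
  have hFIic : ∀ t, F t = - ∫ x in Iic t, g x := by
    intro t
    have h := intervalIntegral.integral_Iic_add_Ioi (b := t) hgi.integrableOn hgi.integrableOn
    rw [hgint] at h
    simp only [hFdef]
    linarith
  set P : ℝ → ℝ := fun t => ∫ x in (0:ℝ)..t, g x with hPdef
  have hP : ∀ t, HasDerivAt P (g t) t := fun t =>
    intervalIntegral.integral_hasDerivAt_right hgi.intervalIntegrable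
      (hgc.stronglyMeasurable.stronglyMeasurableAtFilter)
      hgc.continuousAt
  have hFeq : ∀ t, F t = F 0 - P t := by
    intro t
    have h := intervalIntegral.integral_Iic_sub_Iic (a := (0:ℝ)) (b := t) hgi.integrableOn hgi.integrableOn
    rw [hFIic, hFIic]
    simp only [hPdef]
    linarith
  have hFD : ∀ t, HasDerivAt F (-(g t)) t := by
    intro t
    have h := (hP t).const_sub (F 0)
    exact h.congr_of_eventuallyEq (Filter.Eventually.of_forall hFeq)
  have hFc : Continuous F := continuous_iff_continuousAt.2 fun t => (hFD t).continuousAt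
  have hmono : StrictMonoOn F (Iic τC) := by
    refine strictMonoOn_of_deriv_pos (convex_Iic τC) hFc.continuousOn ?_
    intro x hx
    rw [interior_Iic] at hx
    rw [(hFD x).deriv]
    linarith [hneg x hx]
  have hanti : StrictAntiOn F (Ici τC) := by
    refine strictAntiOn_of_deriv_neg (convex_Ici τC) hFc.continuousOn ?_
    intro x hx
    rw [interior_Ici] at hx
    rw [(hFD x).deriv]
    linarith [hpos x hx]
  have hΔlt : Δ < F τC := lt_of_le_of_ne hΔle (Ne.symm hne)
  -- limits
  have hTop : Tendsto F atTop (𝓝 0) := by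
    have h1 : Tendsto P atTop (𝓝 (F 0)) :=
      intervalIntegral_tendsto_integral_Ioi 0 hgi.integrableOn tendsto_id
    have h2 : Tendsto (fun t => F 0 - P t) atTop (𝓝 (F 0 - F 0)) :=
      tendsto_const_nhds.sub h1
    rw [sub_self] at h2
    exact h2.congr fun t => (hFeq t).symm
  have hBot : Tendsto F atBot (𝓝 0) := by
    have h1 : Tendsto (fun t => ∫ x in t..(0:ℝ), g x) atBot (𝓝 (∫ x in Iic (0:ℝ), g x)) :=
      intervalIntegral_tendsto_integral_Iic 0 hgi.integrableOn tendsto_id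
    have h2 : Tendsto (fun t => F 0 + ∫ x in t..(0:ℝ), g x) atBot
        (𝓝 (F 0 + ∫ x in Iic (0:ℝ), g x)) := tendsto_const_nhds.add h1
    have h3 : F 0 + ∫ x in Iic (0:ℝ), g x = 0 := by rw [hFIic 0]; ring
    rw [h3] at h2
    refine h2.congr fun t => ?_
    rw [hFeq t]
    simp only [hPdef]
    rw [intervalIntegral.integral_symm]
    ring
  -- find a < τC with F a < Δ
  obtain ⟨a, haτ, hFa⟩ : ∃ a, a < τC ∧ F a < Δ := by
    have h1 : ∀ᶠ t in atBot, F t < Δ := hBot.eventually_lt_const hΔpos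
    have h2 : ∀ᶠ t in atBot, t < τC := eventually_lt_atBot τC
    obtain ⟨a, ha1, ha2⟩ := (h2.and h1).exists
    exact ⟨a, ha1, ha2⟩
  obtain ⟨b, hbτ, hFb⟩ : ∃ b, τC < b ∧ F b < Δ := by
    have h1 : ∀ᶠ t in atTop, F t < Δ := hTop.eventually_lt_const hΔpos
    have h2 : ∀ᶠ t in atTop, τC < t := eventually_gt_atTop τC
    obtain ⟨b, hb1, hb2⟩ := (h2.and h1).exists
    exact ⟨b, hb1, hb2⟩
  -- IVT
  obtain ⟨τL, hτLmem, hFτL⟩ := intermediate_value_Icc haτ.le hFc.continuousOn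
    (⟨hFa.le, hΔlt.le⟩ : Δ ∈ Icc (F a) (F τC))
  obtain ⟨τH, hτHmem, hFτH⟩ := intermediate_value_Icc' hbτ.le hFc.continuousOn
    (⟨hFb.le, hΔlt.le⟩ : Δ ∈ Icc (F b) (F τC))
  have hτLlt : τL < τC := lt_of_le_of_ne hτLmem.2 (by rintro rfl; exact hne hFτL)
  have hτHgt : τC < τH := lt_of_le_of_ne (hτHmem.1) (by rintro rfl; exact hne hFτH)
  refine ⟨τL, τH, hτLlt, hτHgt, hFτL, hFτH, ?_⟩
  intro τ hτ
  rcases le_total τ τC with h | h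
  · left
    exact hmono.injOn (mem_Iic.2 h) (mem_Iic.2 hτLlt.le) (hτ.trans hFτL.symm)
  · right
    exact hanti.injOn (mem_Ici.2 h) (mem_Ici.2 hτHgt.le) (hτ.trans hFτH.symm)

theorem stmt7 (f0 f1 δ : ℝ → ℝ) (τC : ℝ)
    (hf0pos : ∀ x, 0 < f0 x) (hf1pos : ∀ x, 0 < f1 x)
    (hf0c : Continuous f0) (hf1c : Continuous f1)
    (hf0i : Integrable f0) (hf1i : Integrable f1)
    (hf0int : ∫ x, f0 x = 1) (hf1int : ∫ x, f1 x = 1)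
    (hmlrp : StrictMono (fun x => f1 x / f0 x))
    (hτC : f1 τC = f0 τC)
    (hδm : Measurable δ) (hδ0 : ∀ x, 0 ≤ δ x) (hδ1 : ∀ x, δ x ≤ 1)
    (hΔpos : 0 < ∫ x, (f1 x - f0 x) * δ x)
    (hne : (∫ x in Ioi τC, (f1 x - f0 x)) ≠ ∫ x, (f1 x - f0 x) * δ x) :
    ∃ τL τH : ℝ, τL < τC ∧ τC < τH ∧
      (∫ x in Ioi τL, (f1 x - f0 x)) = ∫ x, (f1 x - f0 x) * δ x ∧
      (∫ x in Ioi τH, (f1 x - f0 x)) = ∫ x, (f1 x - f0 x) * δ x ∧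
      ∀ τ : ℝ, (∫ x in Ioi τ, (f1 x - f0 x)) = ∫ x, (f1 x - f0 x) * δ x →
        τ = τL ∨ τ = τH := by
  have hgi : Integrable (fun x => f1 x - f0 x) := hf1i.sub hf0i
  have hgc : Continuous (fun x => f1 x - f0 x) := hf1c.sub hf0c
  have hgint : ∫ x, (f1 x - f0 x) = 0 := by
    rw [integral_sub hf1i hf0i, hf1int, hf0int]; ring
  have hneg : ∀ x, x < τC → f1 x - f0 x < 0 := by
    intro x hx
    have h : f1 x / f0 x < f1 τC / f0 τC := hmlrp hx
    rw [hτC, div_self (hf0pos τC).ne'] at h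
    have := (div_lt_one (hf0pos x)).1 h
    linarith
  have hpos : ∀ x, τC < x → 0 < f1 x - f0 x := by
    intro x hx
    have h : f1 τC / f0 τC < f1 x / f0 x := hmlrp hx
    rw [hτC, div_self (hf0pos τC).ne'] at h
    have := (one_lt_div (hf0pos x)).1 h
    linarith
  -- integrability of (f1 - f0) * δ
  have hgδi : Integrable (fun x => (f1 x - f0 x) * δ x) := by
    have := hgi.bdd_mul (c := 1) (hδm.aestronglyMeasurable) (Filter.Eventually.of_forall fun x => by
      rw [Real.norm_eq_abs, abs_le]; exact ⟨by linarith [hδ0 x], hδ1 x⟩)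
    exact this.congr (Filter.Eventually.of_forall fun x => by ring)
  -- Δ ≤ ∫ Ioi τC g
  have hΔle : (∫ x, (f1 x - f0 x) * δ x) ≤ ∫ x in Ioi τC, (f1 x - f0 x) := by
    rw [← integral_indicator measurableSet_Ioi]
    refine integral_mono hgδi (hgi.indicator measurableSet_Ioi) fun x => ?_
    by_cases hx : x ∈ Ioi τC
    · rw [indicator_of_mem hx]
      have h1 : 0 < f1 x - f0 x := hpos x hx
      nlinarith [hδ1 x, hδ0 x]
    · rw [indicator_of_notMem hx]
      have hxle : x ≤ τC := not_lt.1 hx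
      rcases lt_or_eq_of_le hxle with h | h
      · nlinarith [hneg x h, hδ0 x]
      · subst h; rw [hτC]; nlinarith [hδ0 x]
  exact helper7 (fun x => f1 x - f0 x) hgc hgi hgint τC hneg hpos
    (∫ x, (f1 x - f0 x) * δ x) hΔpos hΔle hne
end

section
/- Let τ_H > τ_C and let η(x) = δ(x) − 1{x > τ_H}. If ∫_ℝ (f₁(x) − f₀(x)) η(x) dx = 0, then ∫_ℝ f₀(x) η(x) dx ≥ 0. In the paper's notation, R₀⁺(τ_H) = δ₀ − ∫_{τ_H}^∞ f₀ dx ≥ 0. -/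
open MeasureTheory Set

theorem stmt8 (f0 f1 δ : ℝ → ℝ) (τC τH : ℝ)
    (hf0pos : ∀ x, 0 < f0 x) (hf1pos : ∀ x, 0 < f1 x)
    (hf0c : Continuous f0) (hf1c : Continuous f1)
    (hf0i : Integrable f0) (hf1i : Integrable f1)
    (hmlrp : StrictMono (fun x => f1 x / f0 x - 1))
    (hτC : f1 τC / f0 τC - 1 = 0) (hH : τC < τH)
    (hδm : Measurable δ) (hδ0 : ∀ x, 0 ≤ δ x) (hδ1 : ∀ x, δ x ≤ 1)
    (hzero : ∫ x, (f1 x - f0 x) * (δ x - if τH < x then 1 else 0) = 0) :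
    0 ≤ ∫ x, f0 x * (δ x - if τH < x then 1 else 0) := by
  set η : ℝ → ℝ := fun x => δ x - if τH < x then 1 else 0 with hηdef
  have hηm : Measurable η := by
    apply hδm.sub
    exact Measurable.ite measurableSet_Ioi measurable_const measurable_const
  have hηb : ∀ x, ‖η x‖ ≤ 1 := by
    intro x
    simp only [hηdef, Real.norm_eq_abs, abs_le]
    constructor <;> split_ifs <;> nlinarith [hδ0 x, hδ1 x]
  set gH : ℝ := f1 τH / f0 τH - 1 with hgHdef
  have hgH : 0 < gH := by
    have h : f1 τC / f0 τC - 1 < f1 τH / f0 τH - 1 := hmlrp hH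
    rw [hτC] at h
    exact h
  have hint0 : Integrable (fun x => η x * f0 x) :=
    hf0i.bdd_mul (c := 1) hηm.aestronglyMeasurable (Filter.Eventually.of_forall hηb)
  have hint1 : Integrable (fun x => η x * (f1 x - f0 x)) :=
    (hf1i.sub hf0i).bdd_mul (c := 1) hηm.aestronglyMeasurable (Filter.Eventually.of_forall hηb)
  have hpt : ∀ x, (f1 x - f0 x) * η x - gH * (f0 x * η x) ≤ 0 := by
    intro x
    have h0 := hf0pos x
    have heq : (f1 x - f0 x) * η x - gH * (f0 x * η x)
        = f0 x * ((f1 x / f0 x - 1) - gH) * η x := by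
      field_simp
    rw [heq]
    rcases le_or_gt x τH with hx | hx
    · have hg : (f1 x / f0 x - 1) ≤ gH := by
        rcases eq_or_lt_of_le hx with rfl | hlt
        · simp [hgHdef]
        · exact le_of_lt (hmlrp hlt)
      have hη : 0 ≤ η x := by
        simp only [hηdef, if_neg (not_lt.mpr hx), sub_zero]
        exact hδ0 x
      have : f0 x * (f1 x / f0 x - 1 - gH) * η x
          = (f1 x / f0 x - 1 - gH) * (f0 x * η x) := by ring
      rw [this]
      exact mul_nonpos_of_nonpos_of_nonneg (by linarith) (mul_nonneg h0.le hη)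
    · have hg : gH ≤ (f1 x / f0 x - 1) := le_of_lt (hmlrp hx)
      have hη : η x ≤ 0 := by
        simp only [hηdef, if_pos hx]
        nlinarith [hδ1 x]
      have : f0 x * (f1 x / f0 x - 1 - gH) * η x
          = ((f1 x / f0 x - 1 - gH) * f0 x) * η x := by ring
      rw [this]
      exact mul_nonpos_of_nonneg_of_nonpos (mul_nonneg (by linarith) h0.le) hη
  have key : ∫ x, ((f1 x - f0 x) * η x - gH * (f0 x * η x)) ≤ 0 :=
    integral_nonpos hpt
  have hsplit : ∫ x, ((f1 x - f0 x) * η x - gH * (f0 x * η x))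
      = (∫ x, (f1 x - f0 x) * η x) - gH * ∫ x, f0 x * η x := by
    rw [integral_sub]
    · rw [integral_const_mul]
    · have : (fun x => (f1 x - f0 x) * η x) = fun x => η x * (f1 x - f0 x) := by
        funext x; ring
      rw [this]; exact hint1
    · have : (fun x => gH * (f0 x * η x)) = fun x => gH * (η x * f0 x) := by
        funext x; ring
      rw [this]; exact hint0.const_mul gH
  have hz : ∫ x, (f1 x - f0 x) * η x = 0 := hzero
  rw [hsplit, hz] at key
  nlinarith [key, hgH]
end

section
/- Let τ_L < τ_C and let η(x) = δ(x) − 1{x > τ_L}. If ∫_ℝ (f₁(x) − f₀(x)) η(x) dx = 0, then ∫_ℝ f₁(x) η(x) dx ≤ 0. In the paper's notation, R₁⁺(τ_L) = δ₁ − ∫_{τ_L}^∞ f₁ dx ≤ 0. -/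
open MeasureTheory Set

theorem stmt9 (f0 f1 δ : ℝ → ℝ) (τC τL : ℝ)
    (hf0pos : ∀ x, 0 < f0 x) (hf1pos : ∀ x, 0 < f1 x)
    (hf0c : Continuous f0) (hf1c : Continuous f1)
    (hf0i : Integrable f0) (hf1i : Integrable f1)
    (hmlrp : StrictMono (fun x => f1 x / f0 x))
    (hτC : f1 τC = f0 τC) (hL : τL < τC)
    (hδm : Measurable δ) (hδ0 : ∀ x, 0 ≤ δ x) (hδ1 : ∀ x, δ x ≤ 1)
    (hzero : ∫ x, (f1 x - f0 x) * (δ x - if τL < x then 1 else 0) = 0) :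
    ∫ x, f1 x * (δ x - if τL < x then 1 else 0) ≤ 0 := by
  set η : ℝ → ℝ := fun x => δ x - if τL < x then 1 else 0 with hη
  set c : ℝ := f1 τL / f0 τL with hc
  have hc1 : c < 1 := by
    have h := hmlrp hL
    simp only at h
    rwa [hτC, div_self (hf0pos τC).ne'] at h
  -- measurability of η
  have hindm : Measurable (fun x : ℝ => if τL < x then (1:ℝ) else 0) := by
    exact Measurable.ite measurableSet_Ioi measurable_const measurable_const
  have hηm : Measurable η := hδm.sub hindm
  have hηb : ∀ x, |η x| ≤ 1 := by
    intro x
    rw [abs_le]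
    constructor <;> simp only [hη] <;> split_ifs <;>
      [linarith [hδ0 x]; linarith [hδ0 x]; linarith [hδ1 x]; linarith [hδ1 x]]
  -- integrability
  have hint : ∀ g : ℝ → ℝ, Continuous g → Integrable g → (∀ x, 0 < g x) →
      Integrable (fun x => g x * η x) := by
    intro g hgc hgi hgp
    refine hgi.mono' ((hgc.measurable.mul hηm).aestronglyMeasurable) ?_
    filter_upwards with x
    rw [norm_mul]
    calc ‖g x‖ * ‖η x‖ ≤ ‖g x‖ * 1 := by
          exact mul_le_mul_of_nonneg_left (hηb x) (norm_nonneg _)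
      _ = g x := by rw [mul_one, Real.norm_eq_abs, abs_of_pos (hgp x)]
  have hi0 : Integrable (fun x => f0 x * η x) := hint f0 hf0c hf0i hf0pos
  have hi1 : Integrable (fun x => f1 x * η x) := hint f1 hf1c hf1i hf1pos
  have hi10 : Integrable (fun x => (f1 x - f0 x) * η x) := by
    have : (fun x => (f1 x - f0 x) * η x) = fun x => f1 x * η x - f0 x * η x := by
      funext x; ring
    rw [this]; exact hi1.sub hi0
  -- pointwise inequality
  have hpt : ∀ x, (f1 x - f0 x) * η x ≤ (c - 1) * (f0 x * η x) := by
    intro x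
    by_cases hx : τL < x
    · -- η x ≤ 0, and c * f0 x ≤ f1 x
      have hη0 : η x ≤ 0 := by simp only [hη]; rw [if_pos hx]; linarith [hδ1 x]
      have hr : c ≤ f1 x / f0 x := le_of_lt (hmlrp hx)
      have h1 : c * f0 x ≤ f1 x := by
        rw [hc] at hr ⊢
        calc f1 τL / f0 τL * f0 x ≤ f1 x / f0 x * f0 x :=
              mul_le_mul_of_nonneg_right hr (hf0pos x).le
          _ = f1 x := by rw [div_mul_cancel₀ _ (hf0pos x).ne']
      nlinarith [hf0pos x]
    · -- η x ≥ 0, and f1 x ≤ c * f0 x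
      have hη0 : 0 ≤ η x := by simp only [hη]; rw [if_neg hx]; linarith [hδ0 x]
      have hr : f1 x / f0 x ≤ c := by
        rcases lt_or_eq_of_le (not_lt.mp hx) with h | h
        · exact le_of_lt (hmlrp h)
        · rw [hc, h]
      have h1 : f1 x ≤ c * f0 x := by
        rw [hc] at hr ⊢
        calc f1 x = f1 x / f0 x * f0 x := by rw [div_mul_cancel₀ _ (hf0pos x).ne']
          _ ≤ f1 τL / f0 τL * f0 x := mul_le_mul_of_nonneg_right hr (hf0pos x).le
      nlinarith [hf0pos x]
  -- integrate
  have hmono : ∫ x, (f1 x - f0 x) * η x ≤ ∫ x, (c - 1) * (f0 x * η x) :=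
    integral_mono hi10 (hi0.const_mul _) hpt
  rw [hzero] at hmono
  rw [integral_const_mul] at hmono
  have h0η : ∫ x, f0 x * η x ≤ 0 := by
    by_contra h
    push_neg at h
    nlinarith
  have hsplit : ∫ x, f1 x * η x = (∫ x, (f1 x - f0 x) * η x) + ∫ x, f0 x * η x := by
    rw [← integral_add hi10 hi0]
    congr 1; funext x; ring
  simp only [hη] at hsplit
  rw [hsplit, hzero]
  simpa using h0η
end

section
/- Let τ_L < τ_C and let η(x) = δ(x) − 1{x < τ_L}. If ∫_ℝ (f₁(x) − f₀(x)) η(x) dx = 0, then ∫_ℝ f₁(x) η(x) dx ≥ 0. In the paper's notation, R₁⁻(τ_L) = δ₁ − ∫_{−∞}^{τ_L} f₁ dx ≥ 0. -/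
/-!
With `c = f₁(τ_L)/f₀(τ_L)`, monotonicity of the likelihood ratio gives `f₁ - c f₀ ≤ 0` left of
`τ_L` and `≥ 0` right of it, exactly the sign pattern of `η`. Hence `∫ (f₁ - c f₀) η ≥ 0`. Since
`∫ f₁ η = ∫ f₀ η`, this integral equals `(1 - c) ∫ f₁ η`, and `c < 1` because the ratio is `1`
at `τ_C > τ_L`.
-/

open MeasureTheory

section LikelihoodRatio

variable {α : Type*} [LinearOrder α] {f0 f1 η : α → ℝ} {t : α}

lemma sub_div_mul_mul_nonneg_of_monotone_ratio (hf0 : ∀ x, 0 < f0 x)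
    (hmono : Monotone fun x => f1 x / f0 x)
    (hη_neg : ∀ x < t, η x ≤ 0) (hη_pos : ∀ x, t ≤ x → 0 ≤ η x) (x : α) :
    0 ≤ (f1 x - f1 t / f0 t * f0 x) * η x := by
  rcases lt_or_ge x t with hx | hx
  · have : f1 x ≤ f1 t / f0 t * f0 x := (div_le_iff₀ (hf0 x)).mp (hmono hx.le)
    exact mul_nonneg_of_nonpos_of_nonpos (by linarith) (hη_neg x hx)
  · have : f1 t / f0 t * f0 x ≤ f1 x := (le_div_iff₀ (hf0 x)).mp (hmono hx)
    exact mul_nonneg (by linarith) (hη_pos x hx)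

theorem integral_mul_nonneg_of_monotone_ratio [MeasurableSpace α] {μ : Measure α}
    (hf0 : ∀ x, 0 < f0 x) (hmono : Monotone fun x => f1 x / f0 x) (ht : f1 t < f0 t)
    (hη_neg : ∀ x < t, η x ≤ 0) (hη_pos : ∀ x, t ≤ x → 0 ≤ η x)
    (hi0 : Integrable (fun x => f0 x * η x) μ) (hi1 : Integrable (fun x => f1 x * η x) μ)
    (hzero : ∫ x, (f1 x - f0 x) * η x ∂μ = 0) :
    0 ≤ ∫ x, f1 x * η x ∂μ := by
  set c := f1 t / f0 t
  have hc : c < 1 := (div_lt_one (hf0 t)).mpr ht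
  have heq : ∫ x, f1 x * η x ∂μ = ∫ x, f0 x * η x ∂μ := by
    simp only [sub_mul] at hzero
    rwa [integral_sub hi1 hi0, sub_eq_zero] at hzero
  have h : 0 ≤ ∫ x, (f1 x * η x - c * (f0 x * η x)) ∂μ :=
    integral_nonneg fun x =>
      (sub_div_mul_mul_nonneg_of_monotone_ratio hf0 hmono hη_neg hη_pos x).trans_eq (by ring)
  rw [integral_sub hi1 (hi0.const_mul c), integral_const_mul, ← heq, ← one_sub_mul] at h
  exact nonneg_of_mul_nonneg_right h (sub_pos.mpr hc)

end LikelihoodRatio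

theorem stmt10_general (f0 f1 δ : ℝ → ℝ) (τC τL : ℝ)
    (hf0pos : ∀ x, 0 < f0 x)
    (hf0i : Integrable f0) (hf1i : Integrable f1)
    (hmlrp : StrictMono (fun x => f1 x / f0 x))
    (hτC : f1 τC = f0 τC) (hL : τL < τC)
    (hδm : Measurable δ) (hδ0 : ∀ x, 0 ≤ δ x) (hδ1 : ∀ x, δ x ≤ 1)
    (hzero : ∫ x, (f1 x - f0 x) * (δ x - if x < τL then 1 else 0) = 0) :
    0 ≤ ∫ x, f1 x * (δ x - if x < τL then 1 else 0) := by
  set η : ℝ → ℝ := fun x => δ x - if x < τL then 1 else 0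
  have hη_meas : AEStronglyMeasurable η :=
    (hδm.sub (measurable_const.ite measurableSet_Iio measurable_const)).aestronglyMeasurable
  have hη_bdd : ∀ᵐ x, ‖η x‖ ≤ 1 := .of_forall fun x => by
    rw [Real.norm_eq_abs, abs_le]
    simp only [η]
    split_ifs <;> constructor <;> linarith [hδ0 x, hδ1 x]
  have hτL : f1 τL < f0 τL := by
    have : f1 τL / f0 τL < f1 τC / f0 τC := hmlrp hL
    rwa [hτC, div_self (hf0pos τC).ne', div_lt_one (hf0pos τL)] at this
  refine integral_mul_nonneg_of_monotone_ratio hf0pos hmlrp.monotone hτL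
    (fun x hx => ?_) (fun x hx => ?_) (hf0i.mul_bdd hη_meas hη_bdd)
    (hf1i.mul_bdd hη_meas hη_bdd) hzero
  · simp only [if_pos hx]
    linarith [hδ1 x]
  · simp only [if_neg hx.not_gt]
    linarith [hδ0 x]

theorem stmt10 (f0 f1 δ : ℝ → ℝ) (τC τL : ℝ)
    (hf0pos : ∀ x, 0 < f0 x) (hf1pos : ∀ x, 0 < f1 x)
    (hf0c : Continuous f0) (hf1c : Continuous f1)
    (hf0i : Integrable f0) (hf1i : Integrable f1)
    (hmlrp : StrictMono (fun x => f1 x / f0 x))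
    (hτC : f1 τC = f0 τC) (hL : τL < τC)
    (hδm : Measurable δ) (hδ0 : ∀ x, 0 ≤ δ x) (hδ1 : ∀ x, δ x ≤ 1)
    (hzero : ∫ x, (f1 x - f0 x) * (δ x - if x < τL then 1 else 0) = 0) :
    0 ≤ ∫ x, f1 x * (δ x - if x < τL then 1 else 0) :=
  stmt10_general f0 f1 δ τC τL hf0pos hf0i hf1i hmlrp hτC hL hδm hδ0 hδ1 hzero
end

section
/- Let τ_H > τ_C and let η(x) = δ(x) − 1{x < τ_H}. If ∫_ℝ (f₁(x) − f₀(x)) η(x) dx = 0, then ∫_ℝ f₀(x) η(x) dx ≤ 0. In the paper's notation, R₀⁻(τ_H) = δ₀ − ∫_{−∞}^{τ_H} f₀ dx ≤ 0. -/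
open MeasureTheory Set

theorem stmt11 (f0 f1 δ : ℝ → ℝ) (τC τH : ℝ)
    (hf0pos : ∀ x, 0 < f0 x) (hf1pos : ∀ x, 0 < f1 x)
    (hf0c : Continuous f0) (hf1c : Continuous f1)
    (hf0i : Integrable f0) (hf1i : Integrable f1)
    (hmlrp : StrictMono (fun x => f1 x / f0 x))
    (hτC : f1 τC = f0 τC) (hH : τC < τH)
    (hδm : Measurable δ) (hδ0 : ∀ x, 0 ≤ δ x) (hδ1 : ∀ x, δ x ≤ 1)
    (hzero : ∫ x, (f1 x - f0 x) * (δ x - if x < τH then 1 else 0) = 0) :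
    ∫ x, f0 x * (δ x - if x < τH then 1 else 0) ≤ 0 := by
  set η : ℝ → ℝ := fun x => δ x - if x < τH then 1 else 0 with hη
  set c : ℝ := f1 τH / f0 τH with hc
  have hc1 : 1 < c := by
    have := hmlrp hH
    simpa [hτC, div_self (hf0pos τC).ne'] using this
  have hηm : Measurable η := by
    apply hδm.sub
    exact Measurable.ite (measurableSet_lt measurable_id measurable_const)
      measurable_const measurable_const
  have hηbd : ∀ x, ‖η x‖ ≤ 1 := by
    intro x
    rw [Real.norm_eq_abs, abs_le]
    constructor <;> simp only [hη] <;> split <;>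
      nlinarith [hδ0 x, hδ1 x]
  have hi0 : Integrable (fun x => f0 x * η x) := by
    have := hf0i.bdd_mul (c := 1) hηm.aestronglyMeasurable
      (Filter.Eventually.of_forall hηbd)
    simpa [mul_comm] using this
  have hi1 : Integrable (fun x => f1 x * η x) := by
    have := hf1i.bdd_mul (c := 1) hηm.aestronglyMeasurable
      (Filter.Eventually.of_forall hηbd)
    simpa [mul_comm] using this
  -- pointwise nonnegativity of (f1 - c f0) η
  have hpt : ∀ x, 0 ≤ (f1 x - c * f0 x) * η x := by
    intro x
    rcases lt_or_ge x τH with h | h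
    · have hlt : f1 x / f0 x < c := hmlrp h
      have h1 : f1 x - c * f0 x < 0 := by
        have := (div_lt_iff₀ (hf0pos x)).mp hlt
        linarith
      have h2 : η x ≤ 0 := by
        simp only [hη, if_pos h]
        linarith [hδ1 x]
      nlinarith
    · have hle : c ≤ f1 x / f0 x := by
        rcases eq_or_lt_of_le h with rfl | h'
        · exact le_refl _
        · exact (hmlrp h').le
      have h1 : 0 ≤ f1 x - c * f0 x := by
        have := (le_div_iff₀ (hf0pos x)).mp hle
        linarith
      have h2 : 0 ≤ η x := by
        simp only [hη, if_neg (not_lt.mpr h)]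
        linarith [hδ0 x]
      nlinarith
  have hint : 0 ≤ ∫ x, (f1 x - c * f0 x) * η x := integral_nonneg hpt
  have hsplit : ∫ x, (f1 x - c * f0 x) * η x
      = (∫ x, (f1 x - f0 x) * η x) + (1 - c) * ∫ x, f0 x * η x := by
    rw [← MeasureTheory.integral_const_mul, ← integral_add (by simpa [sub_mul, Pi.sub_def] using hi1.sub hi0) (hi0.const_mul _)]
    congr 1
    ext x
    ring
  rw [hsplit, hzero, zero_add] at hint
  have : 0 ≤ (1 - c) * ∫ x, f0 x * η x := hint
  nlinarith [this]
end

section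
/- Suppose δ : ℝ → [0,1] with Δ_δ > 0, the threshold τ satisfies ∫_τ^∞ (f₁ − f₀) dx = Δ_δ, and R₁⁺(τ) = R₀⁺(τ) = R. Then the accuracy difference between the threshold rule at τ and δ equals (1 − 2H)·R, where H ∈ [0,1] is the prevalence. Consequently, if H ≤ 1/2 and R ≥ 0, or H ≥ 1/2 and R ≤ 0, then the threshold rule is at least as accurate as δ. -/
open MeasureTheory Set

theorem stmt13 (f0 f1 δ : ℝ → ℝ) (τ H R : ℝ)
    (hf0i : Integrable f0) (hf1i : Integrable f1)
    (hf0int : ∫ x, f0 x = 1) (hf1int : ∫ x, f1 x = 1)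
    (hδm : Measurable δ) (hδ0 : ∀ x, 0 ≤ δ x) (hδ1 : ∀ x, δ x ≤ 1)
    (hH0 : 0 ≤ H) (hH1 : H ≤ 1)
    (hΔpos : 0 < ∫ x, (f1 x - f0 x) * δ x)
    (hτ : (∫ x in Ioi τ, (f1 x - f0 x)) = ∫ x, (f1 x - f0 x) * δ x)
    (hR1 : (∫ x, f1 x * δ x) - (∫ x in Ioi τ, f1 x) = R)
    (hR0 : (∫ x, f0 x * δ x) - (∫ x in Ioi τ, f0 x) = R) :
    (H * (∫ x in Ioi τ, f1 x) + (1 - H) * (∫ x in Iic τ, f0 x))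
      - (H * (∫ x, f1 x * δ x) + (1 - H) * ∫ x, f0 x * (1 - δ x))
      = (1 - 2 * H) * R ∧
    ((H ≤ 1/2 ∧ 0 ≤ R) ∨ (1/2 ≤ H ∧ R ≤ 0) →
      H * (∫ x, f1 x * δ x) + (1 - H) * (∫ x, f0 x * (1 - δ x)) ≤
        H * (∫ x in Ioi τ, f1 x) + (1 - H) * (∫ x in Iic τ, f0 x)) := by
  have hbd : ∃ C, ∀ x, ‖δ x‖ ≤ C :=
    ⟨1, fun x => by rw [Real.norm_eq_abs, abs_le]; exact ⟨by linarith [hδ0 x], hδ1 x⟩⟩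
  have h0 : Integrable (fun x => f0 x * δ x) :=
    ((hf0i.bdd_mul hδm.aestronglyMeasurable (Filter.Eventually.of_forall hbd.choose_spec)).congr
      (Filter.Eventually.of_forall fun x => mul_comm _ _))
  have hcompl : ∫ x, f0 x * (1 - δ x) = 1 - ∫ x, f0 x * δ x := by
    have : (fun x => f0 x * (1 - δ x)) = fun x => f0 x - f0 x * δ x := by
      funext x; ring
    rw [this, integral_sub hf0i h0, hf0int]
  have hIic : ∫ x in Iic τ, f0 x = 1 - ∫ x in Ioi τ, f0 x := by
    have := intervalIntegral.integral_Iic_add_Ioi (b := τ) (f := f0) (μ := volume)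
      hf0i.integrableOn hf0i.integrableOn
    rw [hf0int] at this
    linarith
  have key : (H * (∫ x in Ioi τ, f1 x) + (1 - H) * (∫ x in Iic τ, f0 x))
      - (H * (∫ x, f1 x * δ x) + (1 - H) * ∫ x, f0 x * (1 - δ x))
      = (1 - 2 * H) * R := by
    rw [hcompl, hIic]; nlinarith [hR0, hR1]
  refine ⟨key, fun h => ?_⟩
  have : 0 ≤ (1 - 2 * H) * R := by
    rcases h with ⟨h1, h2⟩ | ⟨h1, h2⟩
    · exact mul_nonneg (by linarith) h2
    · nlinarith
  linarith [key]
end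

section
/- Main Theorem: For any measurable δ : ℝ → [0,1] and any continuous prevalence map H : ℝ → [0,1], there exists a threshold rule 1{x > τ} or a negative threshold rule 1{x < τ} (τ ∈ ℝ ∪ {±∞}) whose performative accuracy is at least that of δ, where the performative accuracy of a classifier γ is H(r·Δ_γ)·∫f₁γ dx + (1 − H(r·Δ_γ))·∫f₀(1−γ) dx with Δ_γ = ∫(f₁ − f₀)γ dx and r > 0 fixed. -/
open MeasureTheory Set Filter Topology intervalIntegral

lemma aux_int_mul {f γ : ℝ → ℝ} (hf : Integrable f) (hγ : AEStronglyMeasurable γ volume)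
    (h1 : ∀ x, |γ x| ≤ 1) : Integrable (fun x => f x * γ x) := by
  have := hf.bdd_mul (c := 1) hγ (Eventually.of_forall fun x => by simpa [Real.norm_eq_abs] using h1 x)
  simpa [mul_comm] using this

lemma aux_cmp {f0 f1 δ γ : ℝ → ℝ} (c : ℝ)
    (hA : Integrable (fun x => f1 x * γ x)) (hB : Integrable (fun x => f1 x * δ x))
    (hC : Integrable (fun x => f0 x * γ x)) (hD : Integrable (fun x => f0 x * δ x))
    (hpt : ∀ x, 0 ≤ (f1 x - c * f0 x) * (γ x - δ x)) :
    c * ((∫ x, f0 x * γ x) - ∫ x, f0 x * δ x) ≤ (∫ x, f1 x * γ x) - ∫ x, f1 x * δ x := by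
  have h : (0:ℝ) ≤ ∫ x, (f1 x - c * f0 x) * (γ x - δ x) := integral_nonneg hpt
  have hAB : Integrable (fun x => f1 x * γ x - f1 x * δ x) := hA.sub hB
  have hCD : Integrable (fun x => c * (f0 x * γ x) - c * (f0 x * δ x)) :=
    (hC.const_mul c).sub (hD.const_mul c)
  have heq : (fun x => (f1 x - c * f0 x) * (γ x - δ x)) =
      fun x => (f1 x * γ x - f1 x * δ x) - (c * (f0 x * γ x) - c * (f0 x * δ x)) := by
    funext x; ring
  rw [heq, integral_sub hAB hCD, integral_sub hA hB, integral_sub (hC.const_mul c) (hD.const_mul c),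
    MeasureTheory.integral_const_mul, MeasureTheory.integral_const_mul] at h
  linarith

lemma np_Ioi (f0 f1 δ : ℝ → ℝ) (hf0pos : ∀ x, 0 < f0 x)
    (hmlrp : StrictMono (fun x => f1 x / f0 x))
    (hf0i : Integrable f0) (hf1i : Integrable f1)
    (hδm : Measurable δ) (hδ0 : ∀ x, 0 ≤ δ x) (hδ1 : ∀ x, δ x ≤ 1) (τ : ℝ)
    (hΔ : (∫ x, (f1 x - f0 x) * (if τ < x then (1:ℝ) else 0)) = ∫ x, (f1 x - f0 x) * δ x) :
    0 ≤ (1 - f1 τ / f0 τ) *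
      ((∫ x, f1 x * (if τ < x then (1:ℝ) else 0)) - ∫ x, f1 x * δ x) := by
  set γ : ℝ → ℝ := fun x => if τ < x then (1:ℝ) else 0 with hγ
  set c : ℝ := f1 τ / f0 τ with hc
  have hγval : ∀ x, γ x = if τ < x then (1:ℝ) else 0 := fun x => rfl
  have hγm : Measurable γ := Measurable.ite measurableSet_Ioi measurable_const measurable_const
  have hγb : ∀ x, |γ x| ≤ 1 := fun x => by rw [hγval]; split <;> simp
  have hδb : ∀ x, |δ x| ≤ 1 := fun x => abs_le.2 ⟨by linarith [hδ0 x], hδ1 x⟩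
  have hA : Integrable (fun x => f1 x * γ x) :=
    aux_int_mul hf1i hγm.aestronglyMeasurable hγb
  have hB : Integrable (fun x => f1 x * δ x) :=
    aux_int_mul hf1i hδm.aestronglyMeasurable hδb
  have hC : Integrable (fun x => f0 x * γ x) :=
    aux_int_mul hf0i hγm.aestronglyMeasurable hγb
  have hD : Integrable (fun x => f0 x * δ x) :=
    aux_int_mul hf0i hδm.aestronglyMeasurable hδb
  have hpt : ∀ x, 0 ≤ (f1 x - c * f0 x) * (γ x - δ x) := by
    intro x
    rw [hγval]
    by_cases h : τ < x
    · have h2 : c * f0 x < f1 x := (lt_div_iff₀ (hf0pos x)).mp (hmlrp h)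
      rw [if_pos h]
      nlinarith [hδ1 x]
    · rw [if_neg h]
      push_neg at h
      rcases h.lt_or_eq with h' | h'
      · have h3 : f1 x / f0 x < c := hmlrp h'
        have h2 : f1 x < c * f0 x := by
          rw [div_lt_iff₀ (hf0pos x)] at h3; linarith [h3]
        nlinarith [hδ0 x]
      · subst h'
        have h2 : c * f0 x = f1 x := div_mul_cancel₀ _ (ne_of_gt (hf0pos x))
        nlinarith [hδ0 x]
  have key := aux_cmp c hA hB hC hD hpt
  have eγ : ∫ x, (f1 x - f0 x) * γ x = (∫ x, f1 x * γ x) - ∫ x, f0 x * γ x := by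
    have e : (fun x => (f1 x - f0 x) * γ x) = fun x => f1 x * γ x - f0 x * γ x :=
      funext fun x => by ring
    rw [e, integral_sub hA hC]
  have eδ : ∫ x, (f1 x - f0 x) * δ x = (∫ x, f1 x * δ x) - ∫ x, f0 x * δ x := by
    have e : (fun x => (f1 x - f0 x) * δ x) = fun x => f1 x * δ x - f0 x * δ x :=
      funext fun x => by ring
    rw [e, integral_sub hB hD]
  have hΔ2 : (∫ x, (f1 x - f0 x) * γ x) = ∫ x, (f1 x - f0 x) * δ x := hΔ
  rw [eγ, eδ] at hΔ2
  have hst : (∫ x, f1 x * γ x) - ∫ x, f1 x * δ x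
      = (∫ x, f0 x * γ x) - ∫ x, f0 x * δ x := by linarith
  rw [← hst] at key
  show 0 ≤ (1 - c) * ((∫ x, f1 x * γ x) - ∫ x, f1 x * δ x)
  have h9 : (1 - c) * ((∫ x, f1 x * γ x) - ∫ x, f1 x * δ x)
      = ((∫ x, f1 x * γ x) - ∫ x, f1 x * δ x)
        - c * ((∫ x, f1 x * γ x) - ∫ x, f1 x * δ x) := by ring
  linarith [key, h9]

lemma np_Iio (f0 f1 δ : ℝ → ℝ) (hf0pos : ∀ x, 0 < f0 x)
    (hmlrp : StrictMono (fun x => f1 x / f0 x))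
    (hf0i : Integrable f0) (hf1i : Integrable f1)
    (hδm : Measurable δ) (hδ0 : ∀ x, 0 ≤ δ x) (hδ1 : ∀ x, δ x ≤ 1) (τ : ℝ)
    (hΔ : (∫ x, (f1 x - f0 x) * (if x < τ then (1:ℝ) else 0)) = ∫ x, (f1 x - f0 x) * δ x) :
    0 ≤ (f1 τ / f0 τ - 1) *
      ((∫ x, f1 x * (if x < τ then (1:ℝ) else 0)) - ∫ x, f1 x * δ x) := by
  set γ : ℝ → ℝ := fun x => if x < τ then (1:ℝ) else 0 with hγ
  set c : ℝ := f1 τ / f0 τ with hc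
  have hγval : ∀ x, γ x = if x < τ then (1:ℝ) else 0 := fun x => rfl
  have hγm : Measurable γ := Measurable.ite measurableSet_Iio measurable_const measurable_const
  have hγb : ∀ x, |γ x| ≤ 1 := fun x => by rw [hγval]; split <;> simp
  have hδb : ∀ x, |δ x| ≤ 1 := fun x => abs_le.2 ⟨by linarith [hδ0 x], hδ1 x⟩
  have hA : Integrable (fun x => f1 x * γ x) :=
    aux_int_mul hf1i hγm.aestronglyMeasurable hγb
  have hB : Integrable (fun x => f1 x * δ x) :=
    aux_int_mul hf1i hδm.aestronglyMeasurable hδb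
  have hC : Integrable (fun x => f0 x * γ x) :=
    aux_int_mul hf0i hγm.aestronglyMeasurable hγb
  have hD : Integrable (fun x => f0 x * δ x) :=
    aux_int_mul hf0i hδm.aestronglyMeasurable hδb
  have hpt : ∀ x, 0 ≤ (f1 x - c * f0 x) * (δ x - γ x) := by
    intro x
    rw [hγval]
    by_cases h : x < τ
    · have h3 : f1 x / f0 x < c := hmlrp h
      have h2 : f1 x < c * f0 x := by
        rw [div_lt_iff₀ (hf0pos x)] at h3; linarith [h3]
      rw [if_pos h]
      nlinarith [hδ1 x]
    · rw [if_neg h]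
      push_neg at h
      rcases h.lt_or_eq with h' | h'
      · have h2 : c * f0 x < f1 x := (lt_div_iff₀ (hf0pos x)).mp (hmlrp h')
        nlinarith [hδ0 x]
      · subst h'
        have h2 : c * f0 τ = f1 τ := div_mul_cancel₀ _ (ne_of_gt (hf0pos τ))
        nlinarith [hδ0 τ]
  have key := aux_cmp c hB hA hD hC hpt
  have eγ : ∫ x, (f1 x - f0 x) * γ x = (∫ x, f1 x * γ x) - ∫ x, f0 x * γ x := by
    have e : (fun x => (f1 x - f0 x) * γ x) = fun x => f1 x * γ x - f0 x * γ x :=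
      funext fun x => by ring
    rw [e, integral_sub hA hC]
  have eδ : ∫ x, (f1 x - f0 x) * δ x = (∫ x, f1 x * δ x) - ∫ x, f0 x * δ x := by
    have e : (fun x => (f1 x - f0 x) * δ x) = fun x => f1 x * δ x - f0 x * δ x :=
      funext fun x => by ring
    rw [e, integral_sub hB hD]
  have hΔ2 : (∫ x, (f1 x - f0 x) * γ x) = ∫ x, (f1 x - f0 x) * δ x := hΔ
  rw [eγ, eδ] at hΔ2
  have hst : (∫ x, f1 x * δ x) - ∫ x, f1 x * γ x
      = (∫ x, f0 x * δ x) - ∫ x, f0 x * γ x := by linarith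
  rw [← hst] at key
  show 0 ≤ (c - 1) * ((∫ x, f1 x * γ x) - ∫ x, f1 x * δ x)
  have h9 : (c - 1) * ((∫ x, f1 x * γ x) - ∫ x, f1 x * δ x)
      = ((∫ x, f1 x * δ x) - ∫ x, f1 x * γ x)
        - c * ((∫ x, f1 x * δ x) - ∫ x, f1 x * γ x) := by ring
  linarith [key, h9]

lemma aux_G {g : ℝ → ℝ} (hgi : Integrable g) (hgint : ∫ x, g x = 0) :
    Continuous (fun τ => ∫ x in Iic τ, g x) ∧
    Tendsto (fun τ => ∫ x in Iic τ, g x) atBot (𝓝 0) ∧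
    Tendsto (fun τ => ∫ x in Iic τ, g x) atTop (𝓝 0) := by
  have hrepr : ∀ τ : ℝ, (∫ x in Iic τ, g x)
      = (∫ x in Iic (0:ℝ), g x) + ∫ t in (0:ℝ)..τ, g t := by
    intro τ
    have h := integral_Iic_sub_Iic (a := (0:ℝ)) (b := τ) hgi.integrableOn hgi.integrableOn
    linarith
  have hc : Continuous fun τ : ℝ => ∫ t in (0:ℝ)..τ, g t :=
    intervalIntegral.continuous_primitive (fun a b => hgi.intervalIntegrable) 0
  have hsum : (∫ x in Iic (0:ℝ), g x) + (∫ x in Ioi (0:ℝ), g x) = 0 := by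
    rw [integral_Iic_add_Ioi hgi.integrableOn hgi.integrableOn, hgint]
  refine ⟨(continuous_const.add hc).congr fun τ => (hrepr τ).symm, ?_, ?_⟩
  · have h2 : Tendsto (fun τ : ℝ => ∫ t in τ..(0:ℝ), g t) atBot
        (𝓝 (∫ x in Iic (0:ℝ), g x)) :=
      intervalIntegral_tendsto_integral_Iic 0 hgi.integrableOn tendsto_id
    have h3 : Tendsto (fun τ : ℝ => (∫ x in Iic (0:ℝ), g x) - ∫ t in τ..(0:ℝ), g t) atBot
        (𝓝 ((∫ x in Iic (0:ℝ), g x) - ∫ x in Iic (0:ℝ), g x)) :=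
      tendsto_const_nhds.sub h2
    rw [sub_self] at h3
    refine h3.congr fun τ => ?_
    rw [hrepr τ, intervalIntegral.integral_symm]
    ring
  · have h1 : Tendsto (fun τ : ℝ => ∫ t in (0:ℝ)..τ, g t) atTop
        (𝓝 (∫ x in Ioi (0:ℝ), g x)) :=
      intervalIntegral_tendsto_integral_Ioi 0 hgi.integrableOn tendsto_id
    have h3 : Tendsto (fun τ : ℝ => (∫ x in Iic (0:ℝ), g x) + ∫ t in (0:ℝ)..τ, g t) atTop
        (𝓝 ((∫ x in Iic (0:ℝ), g x) + ∫ x in Ioi (0:ℝ), g x)) :=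
      tendsto_const_nhds.add h1
    rw [hsum] at h3
    exact h3.congr fun τ => (hrepr τ).symm

open MeasureTheory Set Filter Topology intervalIntegral

set_option maxHeartbeats 2000000 in
theorem stmt15 (f0 f1 : ℝ → ℝ) (H : ℝ → ℝ) (r : ℝ) (δ : ℝ → ℝ)
    (hf0pos : ∀ x, 0 < f0 x) (hf1pos : ∀ x, 0 < f1 x)
    (hf0c : Continuous f0) (hf1c : Continuous f1)
    (hf0i : Integrable f0) (hf1i : Integrable f1)
    (hf0int : ∫ x, f0 x = 1) (hf1int : ∫ x, f1 x = 1)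
    (hmlrp : StrictMono (fun x => f1 x / f0 x))
    (hHc : Continuous H) (hHmono : Monotone H)
    (hH0 : ∀ t, 0 ≤ H t) (hH1 : ∀ t, H t ≤ 1)
    (hr : 0 < r)
    (hδm : Measurable δ) (hδ0 : ∀ x, 0 ≤ δ x) (hδ1 : ∀ x, δ x ≤ 1) :
    ∃ γ : ℝ → ℝ,
      ((∃ τ : ℝ, γ = fun x => if τ < x then 1 else 0) ∨
       (∃ τ : ℝ, γ = fun x => if x < τ then 1 else 0) ∨
       (γ = fun _ => 1) ∨ (γ = fun _ => 0)) ∧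
      H (r * ∫ x, (f1 x - f0 x) * δ x) * (∫ x, f1 x * δ x) +
        (1 - H (r * ∫ x, (f1 x - f0 x) * δ x)) * (∫ x, f0 x * (1 - δ x)) ≤
      H (r * ∫ x, (f1 x - f0 x) * γ x) * (∫ x, f1 x * γ x) +
        (1 - H (r * ∫ x, (f1 x - f0 x) * γ x)) * (∫ x, f0 x * (1 - γ x)) := by
  -- basic integrability
  have hgi : Integrable (fun x => f1 x - f0 x) := hf1i.sub hf0i
  have hgint : ∫ x, (f1 x - f0 x) = 0 := by
    rw [integral_sub hf1i hf0i, hf1int, hf0int]; ring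
  have hδb : ∀ x, |δ x| ≤ 1 := fun x => abs_le.2 ⟨by linarith [hδ0 x], hδ1 x⟩
  have hB : Integrable (fun x => f1 x * δ x) :=
    aux_int_mul hf1i hδm.aestronglyMeasurable hδb
  have hD : Integrable (fun x => f0 x * δ x) :=
    aux_int_mul hf0i hδm.aestronglyMeasurable hδb
  have hgδ : Integrable (fun x => (f1 x - f0 x) * δ x) :=
    aux_int_mul hgi hδm.aestronglyMeasurable hδb
  -- G and its properties
  obtain ⟨hGc, hGbot, hGtop⟩ := aux_G hgi hgint
  set G : ℝ → ℝ := fun τ => ∫ x in Iic τ, (f1 x - f0 x) with hGdef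
  -- existence of τ0 with f1 τ0 = f0 τ0
  obtain ⟨τ0, hτ0⟩ : ∃ τ0, f1 τ0 = f0 τ0 := by
    have hnot1 : ¬ (∀ x, f1 x < f0 x) := by
      intro hall
      have hfi : IntervalIntegrable (fun x => f0 x - f1 x) volume 0 1 :=
        (hf0i.sub hf1i).intervalIntegrable
      have hpos : (0:ℝ) < ∫ x in (0:ℝ)..1, (f0 x - f1 x) :=
        intervalIntegral.intervalIntegral_pos_of_pos_on hfi
          (fun x _ => by linarith [hall x]) one_pos
      have hle : (∫ x in (0:ℝ)..1, (f0 x - f1 x)) ≤ ∫ x, (f0 x - f1 x) := by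
        rw [intervalIntegral.integral_of_le (by norm_num : (0:ℝ) ≤ 1)]
        exact setIntegral_le_integral (hf0i.sub hf1i)
          (Eventually.of_forall fun x => by simp; linarith [hall x])
      have : ∫ x, (f0 x - f1 x) = 0 := by
        rw [integral_sub hf0i hf1i, hf1int, hf0int]; ring
      linarith
    have hnot2 : ¬ (∀ x, f0 x < f1 x) := by
      intro hall
      have hfi : IntervalIntegrable (fun x => f1 x - f0 x) volume 0 1 :=
        hgi.intervalIntegrable
      have hpos : (0:ℝ) < ∫ x in (0:ℝ)..1, (f1 x - f0 x) :=
        intervalIntegral.intervalIntegral_pos_of_pos_on hfi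
          (fun x _ => by linarith [hall x]) one_pos
      have hle : (∫ x in (0:ℝ)..1, (f1 x - f0 x)) ≤ ∫ x, (f1 x - f0 x) := by
        rw [intervalIntegral.integral_of_le (by norm_num : (0:ℝ) ≤ 1)]
        exact setIntegral_le_integral hgi
          (Eventually.of_forall fun x => by simp; linarith [hall x])
      linarith
    push_neg at hnot1 hnot2
    obtain ⟨x1, hx1⟩ := hnot1
    obtain ⟨x2, hx2⟩ := hnot2
    have hcont : ContinuousOn (fun x => f1 x - f0 x) (uIcc x2 x1) :=
      (hf1c.sub hf0c).continuousOn
    have hmem : (0:ℝ) ∈ uIcc (f1 x2 - f0 x2) (f1 x1 - f0 x1) :=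
      Set.mem_uIcc.2 (Or.inl ⟨by linarith, by linarith⟩)
    obtain ⟨τ0, _, hτ0⟩ := intermediate_value_uIcc hcont hmem
    exact ⟨τ0, by linarith [sub_eq_zero.mp hτ0]⟩
  have hgt : ∀ x, τ0 < x → f0 x < f1 x := by
    intro x hx
    have h := hmlrp hx
    simp only at h
    rw [hτ0, div_self (ne_of_gt (hf0pos τ0))] at h
    exact (one_lt_div (hf0pos x)).mp h
  have hlt : ∀ x, x < τ0 → f1 x < f0 x := by
    intro x hx
    have h := hmlrp hx
    simp only at h
    rw [hτ0, div_self (ne_of_gt (hf0pos τ0))] at h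
    exact (div_lt_one (hf0pos x)).mp h
  -- translation of threshold integrals
  have hIoiInt : ∀ (f : ℝ → ℝ), Integrable f → ∀ τ : ℝ,
      (∫ x, f x * (if τ < x then (1:ℝ) else 0)) = (∫ x, f x) - ∫ x in Iic τ, f x := by
    intro f hf τ
    have h1 : (fun x => f x * (if τ < x then (1:ℝ) else 0)) = (Ioi τ).indicator f := by
      funext x
      by_cases h : τ < x <;> simp [Set.indicator_apply, Set.mem_Ioi, h]
    rw [h1, MeasureTheory.integral_indicator measurableSet_Ioi]
    have h2 := integral_Iic_add_Ioi (b := τ) hf.integrableOn hf.integrableOn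
    linarith
  have hIioInt : ∀ (f : ℝ → ℝ), Integrable f → ∀ τ : ℝ,
      (∫ x, f x * (if x < τ then (1:ℝ) else 0)) = ∫ x in Iic τ, f x := by
    intro f hf τ
    have h1 : (fun x => f x * (if x < τ then (1:ℝ) else 0)) = (Iio τ).indicator f := by
      funext x
      by_cases h : x < τ <;> simp [Set.indicator_apply, Set.mem_Iio, h]
    rw [h1, MeasureTheory.integral_indicator measurableSet_Iio]
    exact setIntegral_congr_set Iio_ae_eq_Iic
  have hGval : ∀ τ, G τ = ∫ x in Iic τ, (f1 x - f0 x) := fun τ => rfl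
  -- ite helpers
  have hiteIoim : ∀ τ : ℝ, Measurable (fun x : ℝ => if τ < x then (1:ℝ) else 0) :=
    fun τ => Measurable.ite measurableSet_Ioi measurable_const measurable_const
  have hiteIiom : ∀ τ : ℝ, Measurable (fun x : ℝ => if x < τ then (1:ℝ) else 0) :=
    fun τ => Measurable.ite measurableSet_Iio measurable_const measurable_const
  have hiteb : ∀ b : Prop, [Decidable b] → |(if b then (1:ℝ) else 0)| ≤ 1 := by
    intro b _; split <;> simp
  have hite0 : ∀ b : Prop, [Decidable b] → 0 ≤ (if b then (1:ℝ) else 0) := by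
    intro b _; split <;> norm_num
  have hite1 : ∀ b : Prop, [Decidable b] → (if b then (1:ℝ) else 0) ≤ 1 := by
    intro b _; split <;> norm_num
  -- the key reduction
  have key : ∀ γ : ℝ → ℝ, Measurable γ → (∀ x, 0 ≤ γ x) → (∀ x, γ x ≤ 1) →
      (∫ x, (f1 x - f0 x) * γ x) = (∫ x, (f1 x - f0 x) * δ x) →
      0 ≤ (2 * H (r * ∫ x, (f1 x - f0 x) * δ x) - 1) *
        ((∫ x, f1 x * γ x) - ∫ x, f1 x * δ x) →
      H (r * ∫ x, (f1 x - f0 x) * δ x) * (∫ x, f1 x * δ x) +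
        (1 - H (r * ∫ x, (f1 x - f0 x) * δ x)) * (∫ x, f0 x * (1 - δ x)) ≤
      H (r * ∫ x, (f1 x - f0 x) * γ x) * (∫ x, f1 x * γ x) +
        (1 - H (r * ∫ x, (f1 x - f0 x) * γ x)) * (∫ x, f0 x * (1 - γ x)) := by
    intro γ hγm hγ0 hγ1 hΔeq hsign
    have hγb : ∀ x, |γ x| ≤ 1 := fun x => abs_le.2 ⟨by linarith [hγ0 x], hγ1 x⟩
    have hA : Integrable (fun x => f1 x * γ x) :=
      aux_int_mul hf1i hγm.aestronglyMeasurable hγb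
    have hC : Integrable (fun x => f0 x * γ x) :=
      aux_int_mul hf0i hγm.aestronglyMeasurable hγb
    have eγ2 : ∫ x, f0 x * (1 - γ x) = 1 - ∫ x, f0 x * γ x := by
      have e : (fun x => f0 x * (1 - γ x)) = fun x => f0 x - f0 x * γ x :=
        funext fun x => by ring
      rw [e, integral_sub hf0i hC, hf0int]
    have eδ2 : ∫ x, f0 x * (1 - δ x) = 1 - ∫ x, f0 x * δ x := by
      have e : (fun x => f0 x * (1 - δ x)) = fun x => f0 x - f0 x * δ x :=
        funext fun x => by ring
      rw [e, integral_sub hf0i hD, hf0int]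
    have eγ3 : ∫ x, (f1 x - f0 x) * γ x = (∫ x, f1 x * γ x) - ∫ x, f0 x * γ x := by
      have e : (fun x => (f1 x - f0 x) * γ x) = fun x => f1 x * γ x - f0 x * γ x :=
        funext fun x => by ring
      rw [e, integral_sub hA hC]
    have eδ3 : ∫ x, (f1 x - f0 x) * δ x = (∫ x, f1 x * δ x) - ∫ x, f0 x * δ x := by
      have e : (fun x => (f1 x - f0 x) * δ x) = fun x => f1 x * δ x - f0 x * δ x :=
        funext fun x => by ring
      rw [e, integral_sub hB hD]
    have hbγ : ∫ x, f0 x * γ x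
        = (∫ x, f1 x * γ x) - ∫ x, (f1 x - f0 x) * δ x := by
      rw [← hΔeq]; linarith [eγ3]
    have hbδ : ∫ x, f0 x * δ x
        = (∫ x, f1 x * δ x) - ∫ x, (f1 x - f0 x) * δ x := by linarith [eδ3]
    rw [hΔeq, eγ2, eδ2, hbγ, hbδ]
    nlinarith [hsign]
  -- basic facts about δ integrals
  have haδ0 : 0 ≤ ∫ x, f1 x * δ x :=
    integral_nonneg fun x => mul_nonneg (hf1pos x).le (hδ0 x)
  have haδ1 : (∫ x, f1 x * δ x) ≤ 1 := by
    rw [← hf1int]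
    exact integral_mono hB hf1i fun x => by nlinarith [hδ1 x, hf1pos x]
  -- main case analysis
  rcases lt_trichotomy (∫ x, (f1 x - f0 x) * δ x) 0 with hΔneg | hΔ0 | hΔpos
  · -- Δ < 0
    have hγτ0i : Integrable (fun x => (f1 x - f0 x) * (if x < τ0 then (1:ℝ) else 0)) :=
      aux_int_mul hgi (hiteIiom τ0).aestronglyMeasurable (fun x => hiteb _)
    have hptw : ∀ x, (f1 x - f0 x) * (if x < τ0 then (1:ℝ) else 0)
        ≤ (f1 x - f0 x) * δ x := by
      intro x
      by_cases h : x < τ0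
      · rw [if_pos h]; nlinarith [hlt x h, hδ1 x, hδ0 x]
      · rw [if_neg h]; push_neg at h
        rcases h.lt_or_eq with h' | h'
        · nlinarith [hgt x h', hδ0 x, hδ1 x]
        · have h0 : f1 x - f0 x = 0 := by rw [← h', hτ0]; ring
          rw [h0]; simp
    have hDmin : G τ0 ≤ ∫ x, (f1 x - f0 x) * δ x := by
      have h2 := integral_mono hγτ0i hgδ hptw
      have h3 : (∫ x, (f1 x - f0 x) * (if x < τ0 then (1:ℝ) else 0))
          = ∫ x in Iic τ0, (f1 x - f0 x) := hIioInt _ hgi τ0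
      rw [← hGval τ0] at h3
      linarith
    rcases eq_or_lt_of_le hDmin with hedge | hΔgt
    · -- boundary case: δ attains the minimal Δ
      refine ⟨fun x => if x < τ0 then 1 else 0, Or.inr (Or.inl ⟨τ0, rfl⟩), ?_⟩
      have hΔγ : (∫ x, (f1 x - f0 x) * (if x < τ0 then (1:ℝ) else 0))
          = ∫ x, (f1 x - f0 x) * δ x := by
        have h3 := hIioInt _ hgi τ0
        rw [← hGval τ0] at h3
        rw [h3, hedge]
      apply key _ (hiteIiom τ0) (fun x => hite0 _) (fun x => hite1 _) hΔγ
      have hAig : Integrable (fun x => f1 x * (if x < τ0 then (1:ℝ) else 0)) :=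
        aux_int_mul hf1i (hiteIiom τ0).aestronglyMeasurable (fun x => hiteb _)
      have e : (fun x => (f1 x - f0 x) * (δ x - (if x < τ0 then (1:ℝ) else 0)))
          = fun x => (f1 x - f0 x) * δ x - (f1 x - f0 x) * (if x < τ0 then (1:ℝ) else 0) :=
        funext fun x => by ring
      have hintg : Integrable
          (fun x => (f1 x - f0 x) * (δ x - (if x < τ0 then (1:ℝ) else 0))) := by
        rw [e]; exact hgδ.sub hγτ0i
      have hint0 : ∫ x, (f1 x - f0 x) * (δ x - (if x < τ0 then (1:ℝ) else 0)) = 0 := by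
        rw [e, integral_sub hgδ hγτ0i, hΔγ]; ring
      have hptw0 : ∀ x, 0 ≤ (f1 x - f0 x) * (δ x - (if x < τ0 then (1:ℝ) else 0)) := by
        intro x
        by_cases h : x < τ0
        · rw [if_pos h]; nlinarith [hlt x h, hδ1 x]
        · rw [if_neg h]; push_neg at h
          rcases h.lt_or_eq with h' | h'
          · nlinarith [hgt x h', hδ0 x]
          · have h0 : f1 x - f0 x = 0 := by rw [← h', hτ0]; ring
            rw [h0]; simp
      have hae := (integral_eq_zero_iff_of_nonneg hptw0 hintg).mp hint0
      have hne : ∀ᵐ x : ℝ, x ≠ τ0 := by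
        have hs : {x : ℝ | ¬ x ≠ τ0} = {τ0} := by ext y; simp
        rw [ae_iff, hs]
        exact measure_singleton τ0
      have hzero : (fun x => f1 x * (if x < τ0 then (1:ℝ) else 0) - f1 x * δ x)
          =ᵐ[volume] 0 := by
        filter_upwards [hae, hne] with x h1 h2
        have hgx : f1 x - f0 x ≠ 0 := by
          intro hcon
          apply h2
          apply hmlrp.injective
          show f1 x / f0 x = f1 τ0 / f0 τ0
          rw [sub_eq_zero.mp hcon, hτ0, div_self (ne_of_gt (hf0pos x)),
            div_self (ne_of_gt (hf0pos τ0))]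
        simp only [Pi.zero_apply]
        rcases mul_eq_zero.mp h1 with h | h
        · exact absurd h hgx
        · have h4 : (if x < τ0 then (1:ℝ) else 0) = δ x := by linarith [h]
          rw [h4]; ring
      have hs0 : (∫ x, f1 x * (if x < τ0 then (1:ℝ) else 0)) - (∫ x, f1 x * δ x) = 0 := by
        rw [← integral_sub hAig hB]
        exact integral_eq_zero_of_ae hzero
      rw [hs0, mul_zero]
    · by_cases hp : 1 ≤ 2 * H (r * ∫ x, (f1 x - f0 x) * δ x)
      · -- find τ > τ0 with G τ = Δ
        have hev := (hGtop.eventually (eventually_gt_nhds hΔneg)).and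
          (eventually_ge_atTop τ0)
        obtain ⟨M, hM1, hM2⟩ := hev.exists
        have hsub := intermediate_value_Icc hM2 hGc.continuousOn
        have hmem : (∫ x, (f1 x - f0 x) * δ x) ∈ Icc (G τ0) (G M) :=
          ⟨le_of_lt hΔgt, le_of_lt hM1⟩
        obtain ⟨τ, hτmem, hτval⟩ := hsub hmem
        have hττ0 : τ0 < τ := by
          rcases lt_or_eq_of_le hτmem.1 with h | h
          · exact h
          · exfalso; rw [← h] at hτval; linarith
        refine ⟨fun x => if x < τ then 1 else 0, Or.inr (Or.inl ⟨τ, rfl⟩), ?_⟩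
        have hΔγ : (∫ x, (f1 x - f0 x) * (if x < τ then (1:ℝ) else 0))
            = ∫ x, (f1 x - f0 x) * δ x := by
          have h3 := hIioInt _ hgi τ
          rw [← hGval τ] at h3
          rw [h3, hτval]
        apply key _ (hiteIiom τ) (fun x => hite0 _) (fun x => hite1 _) hΔγ
        have hnp := np_Iio f0 f1 δ hf0pos hmlrp hf0i hf1i hδm hδ0 hδ1 τ hΔγ
        have hc1 : 1 < f1 τ / f0 τ := (one_lt_div (hf0pos τ)).2 (hgt τ hττ0)
        have hs : 0 ≤ (∫ x, f1 x * (if x < τ then (1:ℝ) else 0)) - ∫ x, f1 x * δ x := by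
          by_contra hcon
          push_neg at hcon
          nlinarith [hnp]
        exact mul_nonneg (by linarith) hs
      · -- find τ < τ0 with G τ = Δ
        push_neg at hp
        have hev := (hGbot.eventually (eventually_gt_nhds hΔneg)).and
          (eventually_le_atBot τ0)
        obtain ⟨M, hM1, hM2⟩ := hev.exists
        have hsub := intermediate_value_Icc' hM2 hGc.continuousOn
        have hmem : (∫ x, (f1 x - f0 x) * δ x) ∈ Icc (G τ0) (G M) :=
          ⟨le_of_lt hΔgt, le_of_lt hM1⟩
        obtain ⟨τ, hτmem, hτval⟩ := hsub hmem
        have hττ0 : τ < τ0 := by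
          rcases lt_or_eq_of_le hτmem.2 with h | h
          · exact h
          · exfalso; rw [h] at hτval; linarith
        refine ⟨fun x => if x < τ then 1 else 0, Or.inr (Or.inl ⟨τ, rfl⟩), ?_⟩
        have hΔγ : (∫ x, (f1 x - f0 x) * (if x < τ then (1:ℝ) else 0))
            = ∫ x, (f1 x - f0 x) * δ x := by
          have h3 := hIioInt _ hgi τ
          rw [← hGval τ] at h3
          rw [h3, hτval]
        apply key _ (hiteIiom τ) (fun x => hite0 _) (fun x => hite1 _) hΔγ
        have hnp := np_Iio f0 f1 δ hf0pos hmlrp hf0i hf1i hδm hδ0 hδ1 τ hΔγ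
        have hc1 : f1 τ / f0 τ < 1 := (div_lt_one (hf0pos τ)).2 (hlt τ hττ0)
        have hs : (∫ x, f1 x * (if x < τ then (1:ℝ) else 0)) - (∫ x, f1 x * δ x) ≤ 0 := by
          by_contra hcon
          push_neg at hcon
          nlinarith [hnp]
        exact mul_nonneg_of_nonpos_of_nonpos (by linarith) hs
  · -- Δ = 0 : use constant classifiers
    by_cases hp : 1 ≤ 2 * H (r * ∫ x, (f1 x - f0 x) * δ x)
    · refine ⟨fun _ => (1:ℝ), Or.inr (Or.inr (Or.inl rfl)), ?_⟩
      apply key (fun _ => (1:ℝ)) measurable_const (fun _ => zero_le_one) (fun _ => le_refl 1)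
      · show (∫ x, (f1 x - f0 x) * (1:ℝ)) = _
        simp only [mul_one]
        rw [hgint, hΔ0]
      · show 0 ≤ _ * ((∫ x, f1 x * (1:ℝ)) - _)
        simp only [mul_one]
        rw [hf1int]
        exact mul_nonneg (by linarith) (by linarith)
    · push_neg at hp
      refine ⟨fun _ => (0:ℝ), Or.inr (Or.inr (Or.inr rfl)), ?_⟩
      apply key (fun _ => (0:ℝ)) measurable_const (fun _ => le_refl 0) (fun _ => zero_le_one)
      · show (∫ x, (f1 x - f0 x) * (0:ℝ)) = _
        simp only [mul_zero, MeasureTheory.integral_zero]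
        rw [hΔ0]
      · show 0 ≤ _ * ((∫ x, f1 x * (0:ℝ)) - _)
        simp only [mul_zero, MeasureTheory.integral_zero]
        exact mul_nonneg_of_nonpos_of_nonpos (by linarith) (by linarith)
  · -- Δ > 0
    have hγτ0i : Integrable (fun x => (f1 x - f0 x) * (if τ0 < x then (1:ℝ) else 0)) :=
      aux_int_mul hgi (hiteIoim τ0).aestronglyMeasurable (fun x => hiteb _)
    have hptw : ∀ x, (f1 x - f0 x) * δ x
        ≤ (f1 x - f0 x) * (if τ0 < x then (1:ℝ) else 0) := by
      intro x
      by_cases h : τ0 < x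
      · rw [if_pos h]; nlinarith [hgt x h, hδ1 x, hδ0 x]
      · rw [if_neg h]; push_neg at h
        rcases h.lt_or_eq with h' | h'
        · nlinarith [hlt x h', hδ0 x, hδ1 x]
        · have h0 : f1 x - f0 x = 0 := by rw [h', hτ0]; ring
          rw [h0]; simp
    have hDmax : (∫ x, (f1 x - f0 x) * δ x) ≤ -(G τ0) := by
      have h2 := integral_mono hgδ hγτ0i hptw
      have h3 : (∫ x, (f1 x - f0 x) * (if τ0 < x then (1:ℝ) else 0))
          = (∫ x, (f1 x - f0 x)) - ∫ x in Iic τ0, (f1 x - f0 x) := hIoiInt _ hgi τ0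
      rw [hgint, ← hGval τ0] at h3
      linarith
    rcases eq_or_lt_of_le hDmax with hedge | hΔlt
    · -- boundary case: δ attains the maximal Δ
      refine ⟨fun x => if τ0 < x then 1 else 0, Or.inl ⟨τ0, rfl⟩, ?_⟩
      have hΔγ : (∫ x, (f1 x - f0 x) * (if τ0 < x then (1:ℝ) else 0))
          = ∫ x, (f1 x - f0 x) * δ x := by
        have h3 := hIoiInt _ hgi τ0
        rw [hgint, ← hGval τ0] at h3
        rw [h3, hedge]; ring
      apply key _ (hiteIoim τ0) (fun x => hite0 _) (fun x => hite1 _) hΔγ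
      have hAig : Integrable (fun x => f1 x * (if τ0 < x then (1:ℝ) else 0)) :=
        aux_int_mul hf1i (hiteIoim τ0).aestronglyMeasurable (fun x => hiteb _)
      have e : (fun x => (f1 x - f0 x) * ((if τ0 < x then (1:ℝ) else 0) - δ x))
          = fun x => (f1 x - f0 x) * (if τ0 < x then (1:ℝ) else 0) - (f1 x - f0 x) * δ x :=
        funext fun x => by ring
      have hintg : Integrable
          (fun x => (f1 x - f0 x) * ((if τ0 < x then (1:ℝ) else 0) - δ x)) := by
        rw [e]; exact hγτ0i.sub hgδ
      have hint0 : ∫ x, (f1 x - f0 x) * ((if τ0 < x then (1:ℝ) else 0) - δ x) = 0 := by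
        rw [e, integral_sub hγτ0i hgδ, hΔγ]; ring
      have hptw0 : ∀ x, 0 ≤ (f1 x - f0 x) * ((if τ0 < x then (1:ℝ) else 0) - δ x) := by
        intro x
        by_cases h : τ0 < x
        · rw [if_pos h]; nlinarith [hgt x h, hδ1 x]
        · rw [if_neg h]; push_neg at h
          rcases h.lt_or_eq with h' | h'
          · nlinarith [hlt x h', hδ0 x]
          · have h0 : f1 x - f0 x = 0 := by rw [h', hτ0]; ring
            rw [h0]; simp
      have hae := (integral_eq_zero_iff_of_nonneg hptw0 hintg).mp hint0
      have hne : ∀ᵐ x : ℝ, x ≠ τ0 := by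
        have hs : {x : ℝ | ¬ x ≠ τ0} = {τ0} := by ext y; simp
        rw [ae_iff, hs]
        exact measure_singleton τ0
      have hzero : (fun x => f1 x * (if τ0 < x then (1:ℝ) else 0) - f1 x * δ x)
          =ᵐ[volume] 0 := by
        filter_upwards [hae, hne] with x h1 h2
        have hgx : f1 x - f0 x ≠ 0 := by
          intro hcon
          apply h2
          apply hmlrp.injective
          show f1 x / f0 x = f1 τ0 / f0 τ0
          rw [sub_eq_zero.mp hcon, hτ0, div_self (ne_of_gt (hf0pos x)),
            div_self (ne_of_gt (hf0pos τ0))]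
        simp only [Pi.zero_apply]
        rcases mul_eq_zero.mp h1 with h | h
        · exact absurd h hgx
        · have h4 : (if τ0 < x then (1:ℝ) else 0) = δ x := by linarith [h]
          rw [h4]; ring
      have hs0 : (∫ x, f1 x * (if τ0 < x then (1:ℝ) else 0)) - (∫ x, f1 x * δ x) = 0 := by
        rw [← integral_sub hAig hB]
        exact integral_eq_zero_of_ae hzero
      rw [hs0, mul_zero]
    · by_cases hp : 1 ≤ 2 * H (r * ∫ x, (f1 x - f0 x) * δ x)
      · -- find τ < τ0 with G τ = -Δ
        have h1 : (-(∫ x, (f1 x - f0 x) * δ x)) < 0 := by linarith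
        have hev := (hGbot.eventually (eventually_gt_nhds h1)).and (eventually_le_atBot τ0)
        obtain ⟨M, hM1, hM2⟩ := hev.exists
        have hsub := intermediate_value_Icc' hM2 hGc.continuousOn
        have hmem : -(∫ x, (f1 x - f0 x) * δ x) ∈ Icc (G τ0) (G M) :=
          ⟨by linarith, le_of_lt hM1⟩
        obtain ⟨τ, hτmem, hτval⟩ := hsub hmem
        have hττ0 : τ < τ0 := by
          rcases lt_or_eq_of_le hτmem.2 with h | h
          · exact h
          · exfalso; rw [h] at hτval; linarith
        refine ⟨fun x => if τ < x then 1 else 0, Or.inl ⟨τ, rfl⟩, ?_⟩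
        have hΔγ : (∫ x, (f1 x - f0 x) * (if τ < x then (1:ℝ) else 0))
            = ∫ x, (f1 x - f0 x) * δ x := by
          have h3 := hIoiInt _ hgi τ
          rw [hgint, ← hGval τ] at h3
          rw [h3, hτval]; ring
        apply key _ (hiteIoim τ) (fun x => hite0 _) (fun x => hite1 _) hΔγ
        have hnp := np_Ioi f0 f1 δ hf0pos hmlrp hf0i hf1i hδm hδ0 hδ1 τ hΔγ
        have hc1 : f1 τ / f0 τ < 1 := (div_lt_one (hf0pos τ)).2 (hlt τ hττ0)
        have hs : 0 ≤ (∫ x, f1 x * (if τ < x then (1:ℝ) else 0)) - ∫ x, f1 x * δ x := by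
          by_contra hcon
          push_neg at hcon
          nlinarith [hnp]
        exact mul_nonneg (by linarith) hs
      · -- find τ > τ0 with G τ = -Δ
        push_neg at hp
        have h1 : (-(∫ x, (f1 x - f0 x) * δ x)) < 0 := by linarith
        have hev := (hGtop.eventually (eventually_gt_nhds h1)).and (eventually_ge_atTop τ0)
        obtain ⟨M, hM1, hM2⟩ := hev.exists
        have hsub := intermediate_value_Icc hM2 hGc.continuousOn
        have hmem : -(∫ x, (f1 x - f0 x) * δ x) ∈ Icc (G τ0) (G M) :=
          ⟨by linarith, le_of_lt hM1⟩
        obtain ⟨τ, hτmem, hτval⟩ := hsub hmem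
        have hττ0 : τ0 < τ := by
          rcases lt_or_eq_of_le hτmem.1 with h | h
          · exact h
          · exfalso; rw [← h] at hτval; linarith
        refine ⟨fun x => if τ < x then 1 else 0, Or.inl ⟨τ, rfl⟩, ?_⟩
        have hΔγ : (∫ x, (f1 x - f0 x) * (if τ < x then (1:ℝ) else 0))
            = ∫ x, (f1 x - f0 x) * δ x := by
          have h3 := hIoiInt _ hgi τ
          rw [hgint, ← hGval τ] at h3
          rw [h3, hτval]; ring
        apply key _ (hiteIoim τ) (fun x => hite0 _) (fun x => hite1 _) hΔγ
        have hnp := np_Ioi f0 f1 δ hf0pos hmlrp hf0i hf1i hδm hδ0 hδ1 τ hΔγ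
        have hc1 : 1 < f1 τ / f0 τ := (one_lt_div (hf0pos τ)).2 (hgt τ hττ0)
        have hs : (∫ x, f1 x * (if τ < x then (1:ℝ) else 0)) - (∫ x, f1 x * δ x) ≤ 0 := by
          by_contra hcon
          push_neg at hcon
          nlinarith [hnp]
        exact mul_nonneg_of_nonpos_of_nonpos (by linarith) hs
end

section
/- Generalized payoff decomposition: for any measurable δ : ℝ → [0,1], threshold τ with equal induced Δ, and weights A₁, A₀, B₁, B₀ ∈ ℝ, the difference between the generalized payoff of the threshold rule at τ and that of δ equals (1−H)(B₁−B₀)R₀⁺(τ) − H(A₁−A₀)R₁⁺(τ), where the generalized payoff of classifier γ with prevalence H is H∫(A₁γ + A₀(1−γ))f₁ dx + (1−H)∫(B₁(1−γ) + B₀γ)f₀ dx. -/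
open MeasureTheory Set

lemma aux_decomp (f γ : ℝ → ℝ) (a b : ℝ) (hf : Integrable f)
    (hγf : Integrable (fun x => γ x * f x)) :
    ∫ x, (a * γ x + b * (1 - γ x)) * f x
      = b * (∫ x, f x) + (a - b) * ∫ x, γ x * f x := by
  have h : ∀ x, (a * γ x + b * (1 - γ x)) * f x = b * f x + (a - b) * (γ x * f x) := by
    intro x; ring
  simp_rw [h]
  rw [integral_add (hf.const_mul b) (hγf.const_mul (a - b)),
    integral_const_mul, integral_const_mul]

theorem stmt18 (f0 f1 δ : ℝ → ℝ) (τ H A1 A0 B1 B0 : ℝ)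
    (hf0pos : ∀ x, 0 ≤ f0 x) (hf1pos : ∀ x, 0 ≤ f1 x)
    (hf0i : Integrable f0) (hf1i : Integrable f1)
    (hf0int : ∫ x, f0 x = 1) (hf1int : ∫ x, f1 x = 1)
    (hδm : Measurable δ) (hδ0 : ∀ x, 0 ≤ δ x) (hδ1 : ∀ x, δ x ≤ 1)
    (hH0 : 0 ≤ H) (hH1 : H ≤ 1)
    (hτ : (∫ x in Ioi τ, (f1 x - f0 x)) = ∫ x, (f1 x - f0 x) * δ x) :
    (H * (∫ x, (A1 * (if τ < x then (1:ℝ) else 0) + A0 * (1 - if τ < x then (1:ℝ) else 0)) * f1 x) +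
      (1 - H) * (∫ x, (B1 * (1 - if τ < x then (1:ℝ) else 0) + B0 * (if τ < x then (1:ℝ) else 0)) * f0 x))
    - (H * (∫ x, (A1 * δ x + A0 * (1 - δ x)) * f1 x) +
      (1 - H) * (∫ x, (B1 * (1 - δ x) + B0 * δ x) * f0 x))
    = (1 - H) * (B1 - B0) * ((∫ x, f0 x * δ x) - ∫ x in Ioi τ, f0 x)
      - H * (A1 - A0) * ((∫ x, f1 x * δ x) - ∫ x in Ioi τ, f1 x) := by
  set g : ℝ → ℝ := fun x => if τ < x then (1:ℝ) else 0 with hg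
  have hgeq : ∀ (f : ℝ → ℝ), (fun x => g x * f x) = (Ioi τ).indicator f := by
    intro f; ext x
    by_cases hx : τ < x <;> simp [hg, hx, indicator, mem_Ioi]
  have hgi : ∀ (f : ℝ → ℝ), Integrable f → Integrable (fun x => g x * f x) := by
    intro f hf; rw [hgeq]; exact hf.indicator measurableSet_Ioi
  have hgint : ∀ (f : ℝ → ℝ), (∫ x, g x * f x) = ∫ x in Ioi τ, f x := by
    intro f; rw [hgeq, integral_indicator measurableSet_Ioi]
  have hδbd : ∃ C, ∀ x, ‖δ x‖ ≤ C := ⟨1, fun x => by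
    rw [Real.norm_eq_abs, abs_of_nonneg (hδ0 x)]; exact hδ1 x⟩
  have hδi : ∀ (f : ℝ → ℝ), Integrable f → Integrable (fun x => δ x * f x) := by
    intro f hf
    exact hf.bdd_mul hδm.aestronglyMeasurable (Filter.Eventually.of_forall hδbd.choose_spec)
  have e1 := aux_decomp f1 g A1 A0 hf1i (hgi f1 hf1i)
  have e2 := aux_decomp f0 g B0 B1 hf0i (hgi f0 hf0i)
  have e3 := aux_decomp f1 δ A1 A0 hf1i (hδi f1 hf1i)
  have e4 := aux_decomp f0 δ B0 B1 hf0i (hδi f0 hf0i)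
  have c2 : ∀ x, (B1 * (1 - g x) + B0 * g x) * f0 x = (B0 * g x + B1 * (1 - g x)) * f0 x := by
    intro x; ring
  have c4 : ∀ x, (B1 * (1 - δ x) + B0 * δ x) * f0 x = (B0 * δ x + B1 * (1 - δ x)) * f0 x := by
    intro x; ring
  change (H * (∫ x, (A1 * g x + A0 * (1 - g x)) * f1 x) +
      (1 - H) * (∫ x, (B1 * (1 - g x) + B0 * g x) * f0 x)) - _ = _
  simp_rw [c2, c4]
  rw [e1, e2, e3, e4, hgint f1, hgint f0, hf0int, hf1int]
  have hfd : ∀ x, (f1 x - f0 x) * δ x = δ x * f1 x - δ x * f0 x := by intro x; ring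
  have hsub : (∫ x in Ioi τ, f1 x) - (∫ x in Ioi τ, f0 x)
      = (∫ x, δ x * f1 x) - ∫ x, δ x * f0 x := by
    rw [← integral_sub (hf1i.restrict) (hf0i.restrict),
      ← integral_sub (hδi f1 hf1i) (hδi f0 hf0i)]
    simp_rw [← hfd]
    exact hτ
  have hcomm : ∀ (f : ℝ → ℝ), (∫ x, f x * δ x) = ∫ x, δ x * f x := by
    intro f; congr 1; ext x; ring
  rw [hcomm f0, hcomm f1]
  linarith [hsub]
end

section
/- Corollary: if the algorithm's objective weights are accuracy-aligned (A₁ ≥ A₀ and B₁ ≥ B₀) or accuracy-misaligned (A₁ ≤ A₀ and B₁ ≤ B₀), then for any measurable classifier δ : ℝ → [0,1] there exists a threshold or negative threshold rule achieving at least as high a performative generalized payoff, where performative payoff of γ uses prevalence H(r·Δ_γ). -/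
/-!
Among classifiers with the same `Δ`, the payoff is affine in the power `∫ f₁ γ`, with slope
`H (r Δ) (A₁ - A₀) - (1 - H (r Δ)) (B₁ - B₀)`. So it suffices to find threshold rules with the
same `Δ` as `δ` whose power lies below, resp. above, that of `δ`.

For `Δ_δ > 0` take upper rules `1_{τ < x}`. By the Neyman–Pearson argument, such a rule with
`Δ = Δ_δ` has power at least that of `δ` when `f₁ τ / f₀ τ < 1`, and at most when it is `> 1`.
The map `τ ↦ ∫_{(τ, ∞)} (f₁ - f₀)` is continuous, vanishes at `±∞` and is maximal at the crossing
point of the densities, so the intermediate value theorem yields such a `τ` on either side of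
it. The case `Δ_δ < 0` follows by applying this to `1 - δ`, whose complements are the lower
rules `1_{x < τ}`; for `Δ_δ = 0` the constant rules do.
-/

open MeasureTheory Set Filter Topology

section Classifier

variable {α : Type*} [MeasurableSpace α] {μ : Measure α}

def IsClassifier (γ : α → ℝ) : Prop := Measurable γ ∧ ∀ x, γ x ∈ unitInterval

lemma IsClassifier.one_sub {γ : α → ℝ} (hγ : IsClassifier γ) : IsClassifier fun x => 1 - γ x :=
  ⟨measurable_const.sub hγ.1, fun x => Icc.mem_iff_one_sub_mem.1 (hγ.2 x)⟩

lemma IsClassifier.integrable_mul {f γ : α → ℝ} (hf : Integrable f μ) (hγ : IsClassifier γ) :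
    Integrable (fun x => f x * γ x) μ :=
  hf.mul_bdd hγ.1.aestronglyMeasurable (c := 1) <| ae_of_all _ fun x =>
    abs_le.2 ⟨by linarith [(hγ.2 x).1], (hγ.2 x).2⟩

lemma integral_mul_one_sub {f γ : α → ℝ} (hf : Integrable f μ) (hγ : IsClassifier γ) :
    ∫ x, f x * (1 - γ x) ∂μ = ∫ x, f x ∂μ - ∫ x, f x * γ x ∂μ := by
  simp_rw [mul_one_sub]
  exact integral_sub hf (hγ.integrable_mul hf)

lemma integral_sub_mul {f g γ : α → ℝ} (hf : Integrable f μ) (hg : Integrable g μ)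
    (hγ : IsClassifier γ) :
    ∫ x, (f x - g x) * γ x ∂μ = ∫ x, f x * γ x ∂μ - ∫ x, g x * γ x ∂μ := by
  simp_rw [sub_mul]
  exact integral_sub (hγ.integrable_mul hf) (hγ.integrable_mul hg)

lemma integral_affine_mul {f γ : α → ℝ} (a b : ℝ) (hf : Integrable f μ) (hγ : IsClassifier γ) :
    ∫ x, (a * γ x + b * (1 - γ x)) * f x ∂μ = b * ∫ x, f x ∂μ + (a - b) * ∫ x, f x * γ x ∂μ := by
  have h : ∀ x, (a * γ x + b * (1 - γ x)) * f x = b * f x + (a - b) * (f x * γ x) := fun x => by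
    ring
  simp_rw [h]
  rw [integral_add (hf.const_mul b) ((hγ.integrable_mul hf).const_mul _), integral_const_mul,
    integral_const_mul]

theorem neyman_pearson {f0 f1 γ δ : α → ℝ} {k : ℝ} (hf0 : Integrable f0 μ)
    (hf1 : Integrable f1 μ) (hγ : IsClassifier γ) (hδ : IsClassifier δ)
    (hΔ : ∫ x, (f1 x - f0 x) * γ x ∂μ = ∫ x, (f1 x - f0 x) * δ x ∂μ)
    (hpt : ∀ x, 0 ≤ (γ x - δ x) * (f1 x - k * f0 x)) :
    0 ≤ (∫ x, f1 x * γ x ∂μ - ∫ x, f1 x * δ x ∂μ) * (1 - k) := by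
  have hexp : ∫ x, (γ x - δ x) * (f1 x - k * f0 x) ∂μ =
      ∫ x, (f1 x - k * f0 x) * γ x ∂μ - ∫ x, (f1 x - k * f0 x) * δ x ∂μ := by
    simp_rw [mul_comm (_ - _) (f1 _ - _), mul_sub]
    exact integral_sub (hγ.integrable_mul (hf1.sub (hf0.const_mul k)))
      (hδ.integrable_mul (hf1.sub (hf0.const_mul k)))
  have hint_nonneg : 0 ≤ ∫ x, (γ x - δ x) * (f1 x - k * f0 x) ∂μ := integral_nonneg hpt
  rw [hexp, integral_sub_mul hf1 (hf0.const_mul k) hγ, integral_sub_mul hf1 (hf0.const_mul k) hδ]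
    at hint_nonneg
  rw [integral_sub_mul hf1 hf0 hγ, integral_sub_mul hf1 hf0 hδ] at hΔ
  simp_rw [mul_assoc, integral_const_mul] at hint_nonneg
  linear_combination hint_nonneg + k * hΔ

lemma ae_eq_of_mul_le_of_integral_mul_eq {g γ δ : α → ℝ} (hg : Integrable g μ)
    (hγ : IsClassifier γ) (hδ : IsClassifier δ) (hg0 : ∀ᵐ x ∂μ, g x ≠ 0)
    (hle : ∀ x, g x * δ x ≤ g x * γ x) (heq : ∫ x, g x * γ x ∂μ = ∫ x, g x * δ x ∂μ) :
    γ =ᵐ[μ] δ := by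
  have hae : (fun x => g x * δ x) =ᵐ[μ] fun x => g x * γ x :=
    (integral_eq_iff_of_ae_le (hδ.integrable_mul hg) (hγ.integrable_mul hg)
      (ae_of_all _ hle)).1 heq.symm
  filter_upwards [hae, hg0] with x hx hx0
  exact (mul_left_cancel₀ hx0 hx).symm

noncomputable def performativePayoff (μ : Measure α) (f0 f1 : α → ℝ) (H : ℝ → ℝ) (r A1 A0 B1 B0 : ℝ)
    (γ : α → ℝ) : ℝ :=
  H (r * ∫ x, (f1 x - f0 x) * γ x ∂μ) * (∫ x, (A1 * γ x + A0 * (1 - γ x)) * f1 x ∂μ) +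
    (1 - H (r * ∫ x, (f1 x - f0 x) * γ x ∂μ)) * (∫ x, (B1 * (1 - γ x) + B0 * γ x) * f0 x ∂μ)

lemma performativePayoff_le_of_integral_eq {f0 f1 γ δ : α → ℝ} {H : ℝ → ℝ} {r A1 A0 B1 B0 : ℝ}
    (hf0 : Integrable f0 μ) (hf1 : Integrable f1 μ) (hγ : IsClassifier γ) (hδ : IsClassifier δ)
    (hΔ : ∫ x, (f1 x - f0 x) * γ x ∂μ = ∫ x, (f1 x - f0 x) * δ x ∂μ)
    (hpower : 0 ≤ (∫ x, f1 x * γ x ∂μ - ∫ x, f1 x * δ x ∂μ) *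
      (H (r * ∫ x, (f1 x - f0 x) * δ x ∂μ) * (A1 - A0) -
        (1 - H (r * ∫ x, (f1 x - f0 x) * δ x ∂μ)) * (B1 - B0))) :
    performativePayoff μ f0 f1 H r A1 A0 B1 B0 δ ≤
      performativePayoff μ f0 f1 H r A1 A0 B1 B0 γ := by
  have hB : ∀ ψ : α → ℝ, IsClassifier ψ → ∫ x, (B1 * (1 - ψ x) + B0 * ψ x) * f0 x ∂μ =
      B1 * ∫ x, f0 x ∂μ + (B0 - B1) * ∫ x, f0 x * ψ x ∂μ := fun ψ hψ => by
    simpa only [add_comm] using integral_affine_mul B0 B1 hf0 hψ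
  unfold performativePayoff
  rw [hΔ, integral_affine_mul A1 A0 hf1 hγ, integral_affine_mul A1 A0 hf1 hδ, hB γ hγ, hB δ hδ]
  rw [integral_sub_mul hf1 hf0 hγ, integral_sub_mul hf1 hf0 hδ] at hΔ
  linear_combination hpower - (1 - H (r * ∫ x, (f1 x - f0 x) * δ x ∂μ)) * (B1 - B0) * hΔ

end Classifier

theorem exists_eq_zero_of_integral_eq_zero {X : Type*} [TopologicalSpace X] [PreconnectedSpace X]
    [Nonempty X] [MeasurableSpace X] {μ : Measure X} [μ.IsOpenPosMeasure] {g : X → ℝ}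
    (hc : Continuous g) (hi : Integrable g μ) (h0 : ∫ x, g x ∂μ = 0) : ∃ x, g x = 0 := by
  by_contra! hne
  obtain ⟨x₀⟩ := ‹Nonempty X›
  have hsign : (∀ x, 0 < g x) ∨ ∀ x, g x < 0 := by
    by_contra! h
    obtain ⟨⟨a, ha⟩, b, hb⟩ := h
    obtain ⟨z, hz⟩ := intermediate_value_univ a b hc ⟨ha, hb⟩
    exact hne z hz
  rcases hsign with hpos | hneg
  · exact (integral_pos_of_integrable_nonneg_nonzero hc hi (fun x => (hpos x).le) (hne x₀)).ne' h0
  · refine (integral_pos_of_integrable_nonneg_nonzero hc.neg hi.neg (fun x => ?_)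
      (neg_ne_zero.2 (hne x₀))).ne' ?_
    · exact neg_nonneg.2 (hneg x).le
    · simp only [Pi.neg_apply, integral_neg, h0, neg_zero]

lemma exists_gt_eq_of_tendsto_atTop {F : ℝ → ℝ} {a l D : ℝ} (hF : Continuous F)
    (hlim : Tendsto F atTop (𝓝 l)) (hlD : l < D) (hDa : D < F a) : ∃ τ, a < τ ∧ F τ = D := by
  obtain ⟨τ, hτ, hFτ⟩ := isPreconnected_Ici.intermediate_value_Ioc self_mem_Ici
    (le_principal_iff.2 (Ici_mem_atTop a)) hF.continuousOn hlim ⟨hlD, hDa.le⟩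
  exact ⟨τ, lt_of_le_of_ne hτ (by rintro rfl; exact hDa.ne' hFτ), hFτ⟩

lemma exists_lt_eq_of_tendsto_atBot {F : ℝ → ℝ} {a l D : ℝ} (hF : Continuous F)
    (hlim : Tendsto F atBot (𝓝 l)) (hlD : l < D) (hDa : D < F a) : ∃ τ, τ < a ∧ F τ = D := by
  obtain ⟨τ, hτ, hFτ⟩ := isPreconnected_Iic.intermediate_value_Ioc self_mem_Iic
    (le_principal_iff.2 (Iic_mem_atBot a)) hF.continuousOn hlim ⟨hlD, hDa.le⟩
  exact ⟨τ, lt_of_le_of_ne (mem_Iic.1 hτ) (by rintro rfl; exact hDa.ne' hFτ), hFτ⟩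

lemma continuous_integral_Ioi {g : ℝ → ℝ} (hg : Integrable g) :
    Continuous fun τ => ∫ x in Ioi τ, g x :=
  continuous_iff_continuousAt.2 fun τ =>
    (hg.integrableOn.continuousOn_Ici_primitive_Ioi (a₀ := τ - 1)).continuousAt
      (Ici_mem_nhds (by linarith))

lemma tendsto_integral_Ioi_atBot {g : ℝ → ℝ} (hg : Integrable g) :
    Tendsto (fun τ => ∫ x in Ioi τ, g x) atBot (𝓝 (∫ x, g x)) :=
  (aecover_Ioi tendsto_id).integral_tendsto_of_countably_generated hg

noncomputable def upperRule (τ : ℝ) : ℝ → ℝ := fun x => if τ < x then 1 else 0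

noncomputable def lowerRule (τ : ℝ) : ℝ → ℝ := fun x => if x < τ then 1 else 0

def IsThresholdRule (γ : ℝ → ℝ) : Prop :=
  (∃ τ, γ = upperRule τ) ∨ (∃ τ, γ = lowerRule τ) ∨ γ = (fun _ => 1) ∨ γ = (fun _ => 0)

lemma IsThresholdRule.isClassifier {γ : ℝ → ℝ} (hγ : IsThresholdRule γ) : IsClassifier γ := by
  rcases hγ with ⟨τ, rfl⟩ | ⟨τ, rfl⟩ | rfl | rfl
  · exact ⟨measurable_const.ite measurableSet_Ioi measurable_const, fun x => by
      unfold upperRule; split_ifs <;> simp⟩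
  · exact ⟨measurable_const.ite measurableSet_Iio measurable_const, fun x => by
      unfold lowerRule; split_ifs <;> simp⟩
  · exact ⟨measurable_const, fun _ => unitInterval.one_mem⟩
  · exact ⟨measurable_const, fun _ => unitInterval.zero_mem⟩

lemma integral_mul_upperRule (f : ℝ → ℝ) (τ : ℝ) :
    ∫ x, f x * upperRule τ x = ∫ x in Ioi τ, f x := by
  rw [← integral_indicator measurableSet_Ioi]
  congr 1 with x
  by_cases h : τ < x <;> simp [upperRule, indicator, h]

lemma integral_mul_lowerRule {f : ℝ → ℝ} (hf : Integrable f) (τ : ℝ) :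
    ∫ x, f x * lowerRule τ x = (∫ x, f x) - ∫ x, f x * upperRule τ x := by
  have hlow : ∫ x, f x * lowerRule τ x = ∫ x in Iio τ, f x := by
    rw [← integral_indicator measurableSet_Iio]
    congr 1 with x
    by_cases h : x < τ <;> simp [lowerRule, indicator, h]
  have hsplit := intervalIntegral.integral_Iic_add_Ioi (b := τ) hf.integrableOn hf.integrableOn
  rw [integral_Iic_eq_integral_Iio] at hsplit
  rw [hlow, integral_mul_upperRule, ← hsplit, add_sub_cancel_right]

lemma upperRule_sub_mul_nonneg {f0 f1 δ : ℝ → ℝ} (hf0 : ∀ x, 0 < f0 x)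
    (hmlr : StrictMono fun x => f1 x / f0 x) (hδ : ∀ x, δ x ∈ unitInterval) (τ x : ℝ) :
    0 ≤ (upperRule τ x - δ x) * (f1 x - f1 τ / f0 τ * f0 x) := by
  rcases lt_trichotomy x τ with h | rfl | h
  · have : f1 x < f1 τ / f0 τ * f0 x := (div_lt_iff₀ (hf0 x)).1 (hmlr h)
    simp only [upperRule, if_neg h.not_gt]
    nlinarith [(hδ x).1]
  · rw [div_mul_cancel₀ _ (hf0 x).ne', sub_self, mul_zero]
  · have : f1 τ / f0 τ * f0 x < f1 x := (lt_div_iff₀ (hf0 x)).1 (hmlr h)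
    simp only [upperRule, if_pos h]
    nlinarith [(hδ x).2]

section LikelihoodRatio

variable {f0 f1 δ : ℝ → ℝ}

lemma exists_upperRule_bracketing (hf0 : ∀ x, 0 < f0 x) (hf0c : Continuous f0)
    (hf1c : Continuous f1) (hf0i : Integrable f0) (hf1i : Integrable f1)
    (hmass : ∫ x, f0 x = ∫ x, f1 x) (hmlr : StrictMono fun x => f1 x / f0 x)
    (hδ : IsClassifier δ) (hD : 0 < ∫ x, (f1 x - f0 x) * δ x) :
    ∃ τlo τhi : ℝ, ∫ x, (f1 x - f0 x) * upperRule τlo x = ∫ x, (f1 x - f0 x) * δ x ∧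
      ∫ x, (f1 x - f0 x) * upperRule τhi x = ∫ x, (f1 x - f0 x) * δ x ∧
      ∫ x, f1 x * upperRule τlo x ≤ ∫ x, f1 x * δ x ∧
      ∫ x, f1 x * δ x ≤ ∫ x, f1 x * upperRule τhi x := by
  have hgi : Integrable fun x => f1 x - f0 x := hf1i.sub hf0i
  have hg0 : ∫ x, (f1 x - f0 x) = 0 := by rw [integral_sub hf1i hf0i, hmass, sub_self]
  have hu : ∀ τ, IsClassifier (upperRule τ) := fun τ => IsThresholdRule.isClassifier (.inl ⟨τ, rfl⟩)
  obtain ⟨x₀, hx₀⟩ := exists_eq_zero_of_integral_eq_zero (hf1c.sub hf0c) hgi hg0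
  have hk₀ : f1 x₀ / f0 x₀ = 1 := (div_eq_one_iff_eq (hf0 x₀).ne').2 (sub_eq_zero.1 hx₀)
  have hle : ∀ x, (f1 x - f0 x) * δ x ≤ (f1 x - f0 x) * upperRule x₀ x := fun x => by
    have := upperRule_sub_mul_nonneg hf0 hmlr hδ.2 x₀ x
    rw [hk₀, one_mul] at this
    nlinarith
  have hmax : ∫ x, (f1 x - f0 x) * δ x ≤ ∫ x, (f1 x - f0 x) * upperRule x₀ x :=
    integral_mono (hδ.integrable_mul hgi) ((hu x₀).integrable_mul hgi) hle
  have hNP : ∀ τ, ∫ x, (f1 x - f0 x) * upperRule τ x = ∫ x, (f1 x - f0 x) * δ x →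
      0 ≤ ((∫ x, f1 x * upperRule τ x) - ∫ x, f1 x * δ x) * (1 - f1 τ / f0 τ) := fun τ hτ =>
    neyman_pearson hf0i hf1i (hu τ) hδ hτ (upperRule_sub_mul_nonneg hf0 hmlr hδ.2 τ)
  rcases hmax.lt_or_eq with hlt | heq
  · rw [integral_mul_upperRule] at hlt
    have hG := continuous_integral_Ioi hgi
    obtain ⟨τlo, hτlo, hGlo⟩ :=
      exists_gt_eq_of_tendsto_atTop hG (tendsto_integral_Ioi_zero tendsto_id) hD hlt
    obtain ⟨τhi, hτhi, hGhi⟩ :=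
      exists_lt_eq_of_tendsto_atBot hG (hg0 ▸ tendsto_integral_Ioi_atBot hgi) hD hlt
    rw [← integral_mul_upperRule] at hGlo hGhi
    refine ⟨τlo, τhi, hGlo, hGhi, ?_, ?_⟩
    · have hk : 1 < f1 τlo / f0 τlo := hk₀ ▸ hmlr hτlo
      exact sub_nonpos.1 (nonpos_of_mul_nonneg_left (hNP τlo hGlo) (by linarith))
    · have hk : f1 τhi / f0 τhi < 1 := hk₀ ▸ hmlr hτhi
      exact sub_nonneg.1 (nonneg_of_mul_nonneg_left (hNP τhi hGhi) (by linarith))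
  · have hg_ne : ∀ᵐ x, f1 x - f0 x ≠ 0 := by
      filter_upwards [volume.ae_ne x₀] with x hx
      rw [sub_ne_zero, Ne, ← div_eq_one_iff_eq (hf0 x).ne', ← hk₀]
      exact hmlr.injective.ne hx
    have hP : ∫ x, f1 x * upperRule x₀ x = ∫ x, f1 x * δ x := integral_congr_ae <|
      (ae_eq_of_mul_le_of_integral_mul_eq hgi (hu x₀) hδ hg_ne hle heq.symm).mono
        fun x hx => congrArg (f1 x * ·) hx
    exact ⟨x₀, x₀, heq.symm, heq.symm, hP.le, hP.ge⟩

lemma exists_lowerRule_bracketing (hf0 : ∀ x, 0 < f0 x) (hf0c : Continuous f0)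
    (hf1c : Continuous f1) (hf0i : Integrable f0) (hf1i : Integrable f1)
    (hmass : ∫ x, f0 x = ∫ x, f1 x) (hmlr : StrictMono fun x => f1 x / f0 x)
    (hδ : IsClassifier δ) (hD : ∫ x, (f1 x - f0 x) * δ x < 0) :
    ∃ τlo τhi : ℝ, ∫ x, (f1 x - f0 x) * lowerRule τlo x = ∫ x, (f1 x - f0 x) * δ x ∧
      ∫ x, (f1 x - f0 x) * lowerRule τhi x = ∫ x, (f1 x - f0 x) * δ x ∧
      ∫ x, f1 x * lowerRule τlo x ≤ ∫ x, f1 x * δ x ∧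
      ∫ x, f1 x * δ x ≤ ∫ x, f1 x * lowerRule τhi x := by
  have hgi : Integrable fun x => f1 x - f0 x := hf1i.sub hf0i
  have hg0 : ∫ x, (f1 x - f0 x) = 0 := by rw [integral_sub hf1i hf0i, hmass, sub_self]
  have hD' : ∫ x, (f1 x - f0 x) * (1 - δ x) = -∫ x, (f1 x - f0 x) * δ x := by
    rw [integral_mul_one_sub hgi hδ, hg0, zero_sub]
  obtain ⟨σlo, σhi, hΔlo, hΔhi, hPlo, hPhi⟩ := exists_upperRule_bracketing hf0 hf0c hf1c hf0i hf1i
    hmass hmlr hδ.one_sub (by rw [hD']; linarith)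
  rw [hD'] at hΔlo hΔhi
  rw [integral_mul_one_sub hf1i hδ] at hPlo hPhi
  refine ⟨σhi, σlo, ?_, ?_, ?_, ?_⟩ <;>
    simp only [integral_mul_lowerRule hgi, integral_mul_lowerRule hf1i, hg0] <;> linarith

theorem exists_thresholdRule_bracketing (hf0 : ∀ x, 0 < f0 x) (hf1 : ∀ x, 0 ≤ f1 x)
    (hf0c : Continuous f0) (hf1c : Continuous f1) (hf0i : Integrable f0) (hf1i : Integrable f1)
    (hmass : ∫ x, f0 x = ∫ x, f1 x) (hmlr : StrictMono fun x => f1 x / f0 x)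
    (hδ : IsClassifier δ) :
    ∃ γlo γhi : ℝ → ℝ, IsThresholdRule γlo ∧ IsThresholdRule γhi ∧
      ∫ x, (f1 x - f0 x) * γlo x = ∫ x, (f1 x - f0 x) * δ x ∧
      ∫ x, (f1 x - f0 x) * γhi x = ∫ x, (f1 x - f0 x) * δ x ∧
      ∫ x, f1 x * γlo x ≤ ∫ x, f1 x * δ x ∧ ∫ x, f1 x * δ x ≤ ∫ x, f1 x * γhi x := by
  rcases lt_trichotomy (∫ x, (f1 x - f0 x) * δ x) 0 with hneg | hzero | hpos
  · obtain ⟨τlo, τhi, h⟩ :=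
      exists_lowerRule_bracketing hf0 hf0c hf1c hf0i hf1i hmass hmlr hδ hneg
    exact ⟨_, _, .inr (.inl ⟨τlo, rfl⟩), .inr (.inl ⟨τhi, rfl⟩), h⟩
  · refine ⟨fun _ => 0, fun _ => 1, .inr (.inr (.inr rfl)), .inr (.inr (.inl rfl)), ?_, ?_, ?_, ?_⟩
    · simp [hzero]
    · simp only [mul_one, integral_sub hf1i hf0i, hmass, sub_self, hzero]
    · simpa using integral_nonneg fun x => mul_nonneg (hf1 x) (hδ.2 x).1
    · simpa using integral_mono (hδ.integrable_mul hf1i) hf1i fun x =>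
        mul_le_of_le_one_right (hf1 x) (hδ.2 x).2
  · obtain ⟨τlo, τhi, h⟩ :=
      exists_upperRule_bracketing hf0 hf0c hf1c hf0i hf1i hmass hmlr hδ hpos
    exact ⟨_, _, .inl ⟨τlo, rfl⟩, .inl ⟨τhi, rfl⟩, h⟩

end LikelihoodRatio

theorem stmt19_general (f0 f1 : ℝ → ℝ) (H : ℝ → ℝ) (r A1 A0 B1 B0 : ℝ) (δ : ℝ → ℝ)
    (hf0pos : ∀ x, 0 < f0 x) (hf1pos : ∀ x, 0 < f1 x)
    (hf0c : Continuous f0) (hf1c : Continuous f1)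
    (hf0i : Integrable f0) (hf1i : Integrable f1)
    (hf0int : ∫ x, f0 x = 1) (hf1int : ∫ x, f1 x = 1)
    (hmlrp : StrictMono (fun x => f1 x / f0 x))
    (hδm : Measurable δ) (hδ0 : ∀ x, 0 ≤ δ x) (hδ1 : ∀ x, δ x ≤ 1) :
    ∃ γ : ℝ → ℝ,
      ((∃ τ : ℝ, γ = fun x => if τ < x then 1 else 0) ∨
       (∃ τ : ℝ, γ = fun x => if x < τ then 1 else 0) ∨
       (γ = fun _ => 1) ∨ (γ = fun _ => 0)) ∧
      H (r * ∫ x, (f1 x - f0 x) * δ x) * (∫ x, (A1 * δ x + A0 * (1 - δ x)) * f1 x) +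
        (1 - H (r * ∫ x, (f1 x - f0 x) * δ x)) * (∫ x, (B1 * (1 - δ x) + B0 * δ x) * f0 x) ≤
      H (r * ∫ x, (f1 x - f0 x) * γ x) * (∫ x, (A1 * γ x + A0 * (1 - γ x)) * f1 x) +
        (1 - H (r * ∫ x, (f1 x - f0 x) * γ x)) * (∫ x, (B1 * (1 - γ x) + B0 * γ x) * f0 x) := by
  have hδ : IsClassifier δ := ⟨hδm, fun x => ⟨hδ0 x, hδ1 x⟩⟩
  obtain ⟨γlo, γhi, hlo, hhi, hΔlo, hΔhi, hPlo, hPhi⟩ :=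
    exists_thresholdRule_bracketing hf0pos (fun x => (hf1pos x).le) hf0c hf1c hf0i hf1i
      (hf0int.trans hf1int.symm) hmlrp hδ
  rcases le_total 0 (H (r * ∫ x, (f1 x - f0 x) * δ x) * (A1 - A0) -
      (1 - H (r * ∫ x, (f1 x - f0 x) * δ x)) * (B1 - B0)) with hc | hc
  · exact ⟨γhi, hhi, performativePayoff_le_of_integral_eq hf0i hf1i hhi.isClassifier hδ hΔhi
      (mul_nonneg (sub_nonneg.2 hPhi) hc)⟩
  · exact ⟨γlo, hlo, performativePayoff_le_of_integral_eq hf0i hf1i hlo.isClassifier hδ hΔlo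
      (mul_nonneg_of_nonpos_of_nonpos (sub_nonpos.2 hPlo) hc)⟩

theorem stmt19 (f0 f1 : ℝ → ℝ) (H : ℝ → ℝ) (r A1 A0 B1 B0 : ℝ) (δ : ℝ → ℝ)
    (hf0pos : ∀ x, 0 < f0 x) (hf1pos : ∀ x, 0 < f1 x)
    (hf0c : Continuous f0) (hf1c : Continuous f1)
    (hf0i : Integrable f0) (hf1i : Integrable f1)
    (hf0int : ∫ x, f0 x = 1) (hf1int : ∫ x, f1 x = 1)
    (hmlrp : StrictMono (fun x => f1 x / f0 x))
    (hHc : Continuous H) (hHmono : Monotone H)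
    (hH0 : ∀ t, 0 ≤ H t) (hH1 : ∀ t, H t ≤ 1)
    (hr : 0 < r)
    (haligned : (A0 ≤ A1 ∧ B0 ≤ B1) ∨ (A1 ≤ A0 ∧ B1 ≤ B0))
    (hδm : Measurable δ) (hδ0 : ∀ x, 0 ≤ δ x) (hδ1 : ∀ x, δ x ≤ 1) :
    ∃ γ : ℝ → ℝ,
      ((∃ τ : ℝ, γ = fun x => if τ < x then 1 else 0) ∨
       (∃ τ : ℝ, γ = fun x => if x < τ then 1 else 0) ∨
       (γ = fun _ => 1) ∨ (γ = fun _ => 0)) ∧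
      H (r * ∫ x, (f1 x - f0 x) * δ x) * (∫ x, (A1 * δ x + A0 * (1 - δ x)) * f1 x) +
        (1 - H (r * ∫ x, (f1 x - f0 x) * δ x)) * (∫ x, (B1 * (1 - δ x) + B0 * δ x) * f0 x) ≤
      H (r * ∫ x, (f1 x - f0 x) * γ x) * (∫ x, (A1 * γ x + A0 * (1 - γ x)) * f1 x) +
        (1 - H (r * ∫ x, (f1 x - f0 x) * γ x)) * (∫ x, (B1 * (1 - γ x) + B0 * γ x) * f0 x) :=
  stmt19_general f0 f1 H r A1 A0 B1 B0 δ hf0pos hf1pos hf0c hf1c hf0i hf1i hf0int hf1int hmlrp hδm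
    hδ0 hδ1
end
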